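/- arXiv:1408.1324 — 8 statements merged into one kernel-verified Lean document; each statement's English description precedes it below -/
import Mathlib

section
/- For every positive real d and every i ∈ {1,…,n}, the integral of |x_i|^d over the L_d unit ball B_d = {x : Σ_j |x_j|^d ≤ 1} equals (2^n / (n(n+d) d^{n-1})) · Γ(1/d)^n / Γ(n/d). -/
/-!
Both sides come from computing `∫ |x_i|^d e^{-ρ(x)} dx` over `ℝⁿ`, with `ρ(x) = ∑ |x_j|^d`, in
two ways. The integrand is a product of functions of one coordinate, so by Fubini it is a
product of one-dimensional Gamma integrals. On the other hand, `e^{-ρ} = ∫_ρ^∞ e^{-t} dt`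
turns it into `∫_0^∞ e^{-t} K(t) dt` with `K(t) = ∫_{ρ ≤ t} |x_i|^d`; since `ρ` and `|x_i|^d` are
both homogeneous of degree `d`, scaling by `t^{1/d}` gives `K(t) = t^{n/d + 1} K(1)`, so the
integral is `Γ(n/d + 2) K(1)`.
-/

open MeasureTheory Real Set ENNReal Module

section LayerCake

variable {α : Type*} [MeasurableSpace α] {μ : Measure α} [SFinite μ]

theorem ofReal_exp_neg_eq_setLIntegral_Ici (a : ℝ) :
    ENNReal.ofReal (exp (-a)) = ∫⁻ t in Ici a, ENNReal.ofReal (exp (-t)) := by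
  rw [← Measure.restrict_congr_set Ioi_ae_eq_Ici, ← ofReal_integral_eq_lintegral_ofReal
    (by simpa using (exp_neg_integrableOn_Ioi a one_pos).integrable)
    (.of_forall fun t => (exp_pos _).le), integral_exp_neg_Ioi]

theorem lintegral_mul_ofReal_exp_neg_eq_lintegral_sublevel {ρ : α → ℝ} {g : α → ℝ≥0∞}
    (hρ : Measurable ρ) (hg : Measurable g) :
    ∫⁻ x, g x * ENNReal.ofReal (exp (-ρ x)) ∂μ =
      ∫⁻ t, ENNReal.ofReal (exp (-t)) * ∫⁻ x in {x | ρ x ≤ t}, g x ∂μ := by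
  set F : α → ℝ → ℝ≥0∞ := fun x t => if ρ x ≤ t then g x * ENNReal.ofReal (exp (-t)) else 0
  have hF : Measurable (Function.uncurry F) :=
    Measurable.ite (measurableSet_le (hρ.comp measurable_fst) measurable_snd) (by fun_prop)
      measurable_const
  calc ∫⁻ x, g x * ENNReal.ofReal (exp (-ρ x)) ∂μ = ∫⁻ x, (∫⁻ t, F x t) ∂μ := by
        refine lintegral_congr fun x => ?_
        rw [ofReal_exp_neg_eq_setLIntegral_Ici, ← lintegral_const_mul _ (by fun_prop),
          ← lintegral_indicator measurableSet_Ici]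
        exact lintegral_congr fun _ => by simp [F, indicator_apply]
    _ = ∫⁻ t, ∫⁻ x, F x t ∂μ := lintegral_lintegral_swap hF.aemeasurable
    _ = _ := by
        refine lintegral_congr fun t => ?_
        rw [← lintegral_const_mul' _ _ ofReal_ne_top,
          ← lintegral_indicator (measurableSet_le hρ measurable_const)]
        exact lintegral_congr fun _ => by simp [F, indicator_apply, mul_comm]

end LayerCake

theorem lintegral_Ioi_rpow_mul_exp_neg {s : ℝ} (hs : -1 < s) :
    ∫⁻ t in Ioi 0, ENNReal.ofReal (t ^ s * exp (-t)) = ENNReal.ofReal (Gamma (s + 1)) := by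
  have hs' : 0 < s + 1 := by linarith
  rw [Gamma_eq_integral hs', ofReal_integral_eq_lintegral_ofReal (GammaIntegral_convergent hs')
    ((ae_restrict_iff' measurableSet_Ioi).mpr (.of_forall fun t (ht : 0 < t) => by positivity))]
  refine setLIntegral_congr_fun measurableSet_Ioi fun t _ => ?_
  rw [add_sub_cancel_right, mul_comm]

section Homogeneous

variable {E : Type*} [NormedAddCommGroup E] [NormedSpace ℝ E] [FiniteDimensional ℝ E]
  [MeasurableSpace E] [BorelSpace E] (μ : Measure E) [μ.IsAddHaarMeasure]
  {ρ : E → ℝ} {g : E → ℝ≥0∞} {d k : ℝ}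

theorem setLIntegral_sublevel_eq_rpow_mul (hd : 0 < d) (hρm : Measurable ρ)
    (hρ : ∀ c : ℝ, 0 < c → ∀ x, ρ (c • x) = c ^ d * ρ x)
    (hg : ∀ c : ℝ, 0 < c → ∀ x, g (c • x) = ENNReal.ofReal (c ^ k) * g x) {t : ℝ} (ht : 0 < t) :
    ∫⁻ x in {x | ρ x ≤ t}, g x ∂μ =
      ENNReal.ofReal (t ^ ((finrank ℝ E + k) / d)) * ∫⁻ x in {x | ρ x ≤ 1}, g x ∂μ := by
  set c := t ^ d⁻¹
  have hc : 0 < c := rpow_pos_of_pos ht _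
  have hcd : c ^ d = t := rpow_inv_rpow ht.le hd.ne'
  have hmap := lintegral_map_equiv (μ := μ) ({x | ρ x ≤ t}.indicator g)
    (Homeomorph.smulOfNeZero c hc.ne').toMeasurableEquiv
  have hscaled : ∀ x, {x | ρ x ≤ t}.indicator g (c • x) =
      {x | ρ x ≤ 1}.indicator (fun x => ENNReal.ofReal (c ^ k) * g x) x := by
    intro x
    simp only [indicator_apply, mem_ofPred_eq, hρ c hc, hg c hc, hcd, mul_le_iff_le_one_right ht]
  simp only [Homeomorph.toMeasurableEquiv_coe, Homeomorph.smulOfNeZero_apply] at hmap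
  rw [Measure.map_addHaar_smul μ hc.ne', lintegral_smul_measure, lintegral_congr hscaled,
    lintegral_indicator (measurableSet_le hρm measurable_const),
    lintegral_indicator (measurableSet_le hρm measurable_const),
    lintegral_const_mul' _ _ ofReal_ne_top, smul_eq_mul] at hmap
  have hcn : (0 : ℝ) < c ^ finrank ℝ E := pow_pos hc _
  calc ∫⁻ x in {x | ρ x ≤ t}, g x ∂μ
      = ENNReal.ofReal (c ^ finrank ℝ E) *
          (ENNReal.ofReal |(c ^ finrank ℝ E)⁻¹| * ∫⁻ x in {x | ρ x ≤ t}, g x ∂μ) := by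
        rw [← mul_assoc, abs_of_pos (inv_pos.mpr hcn), ← ofReal_mul hcn.le,
          mul_inv_cancel₀ hcn.ne', ofReal_one, one_mul]
    _ = ENNReal.ofReal (c ^ finrank ℝ E) *
          (ENNReal.ofReal (c ^ k) * ∫⁻ x in {x | ρ x ≤ 1}, g x ∂μ) := by
        rw [hmap]
    _ = _ := by
        rw [← mul_assoc, ← ofReal_mul hcn.le, ← Real.rpow_natCast, ← rpow_add hc, ← hcd,
          ← rpow_mul hc.le, mul_div_cancel₀ _ hd.ne']

theorem lintegral_mul_ofReal_exp_neg_eq_Gamma_mul (hd : 0 < d) (hρm : Measurable ρ)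
    (hρ0 : ∀ x, 0 ≤ ρ x) (hρ : ∀ c : ℝ, 0 < c → ∀ x, ρ (c • x) = c ^ d * ρ x)
    (hgm : Measurable g) (hg : ∀ c : ℝ, 0 < c → ∀ x, g (c • x) = ENNReal.ofReal (c ^ k) * g x)
    (hs : -1 < (finrank ℝ E + k) / d) :
    ∫⁻ x, g x * ENNReal.ofReal (exp (-ρ x)) ∂μ =
      ENNReal.ofReal (Gamma ((finrank ℝ E + k) / d + 1)) * ∫⁻ x in {x | ρ x ≤ 1}, g x ∂μ := by
  have hsupp : (Function.support fun t : ℝ =>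
      ENNReal.ofReal (exp (-t)) * ∫⁻ x in {x | ρ x ≤ t}, g x ∂μ) ⊆ Ici 0 := by
    intro t ht
    rw [mem_Ici]
    by_contra! htneg
    have hempty : {x | ρ x ≤ t} = ∅ :=
      eq_empty_of_forall_notMem fun x hx => (htneg.trans_le (hρ0 x)).not_ge hx
    simp [hempty] at ht
  rw [lintegral_mul_ofReal_exp_neg_eq_lintegral_sublevel hρm hgm,
    ← setLIntegral_eq_of_support_subset hsupp,
    ← Measure.restrict_congr_set Ioi_ae_eq_Ici, ← lintegral_Ioi_rpow_mul_exp_neg hs,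
    ← lintegral_mul_const _ (by fun_prop)]
  refine setLIntegral_congr_fun measurableSet_Ioi fun t ht => ?_
  rw [setLIntegral_sublevel_eq_rpow_mul μ hd hρm hρ hg ht, ← mul_assoc,
    ← ofReal_mul (exp_pos _).le, mul_comm (exp _)]

end Homogeneous

section Product

variable {d : ℝ}

theorem integral_abs_rpow_mul_exp_neg_abs_rpow (hd : 0 < d) {q : ℝ} (hq : -1 < q) :
    ∫ t : ℝ, |t| ^ q * exp (-|t| ^ d) = 2 / d * Gamma ((q + 1) / d) := by
  rw [integral_comp_abs (f := fun t => t ^ q * exp (-t ^ d)),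
    integral_rpow_mul_exp_neg_rpow hd hq, ← mul_assoc, mul_one_div]

theorem integrable_abs_rpow_mul_exp_neg_abs_rpow (hd : 0 < d) {q : ℝ} (hq : -1 < q) :
    Integrable fun t : ℝ => |t| ^ q * exp (-|t| ^ d) := by
  have hΓ : 0 < Gamma ((q + 1) / d) := Gamma_pos_of_pos (div_pos (by linarith) hd)
  refine .of_integral_ne_zero ?_
  rw [integral_abs_rpow_mul_exp_neg_abs_rpow hd hq]
  positivity

variable {ι : Type*} [Fintype ι]

theorem integral_prod_abs_rpow_mul_exp_neg_abs_rpow (hd : 0 < d) {q : ι → ℝ}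
    (hq : ∀ j, -1 < q j) :
    ∫ x : ι → ℝ, ∏ j, |x j| ^ q j * exp (-|x j| ^ d) = ∏ j, 2 / d * Gamma ((q j + 1) / d) := by
  rw [integral_fintype_prod_volume_eq_prod (fun j t => |t| ^ q j * exp (-|t| ^ d))]
  exact Finset.prod_congr rfl fun j _ => integral_abs_rpow_mul_exp_neg_abs_rpow hd (hq j)

theorem abs_rpow_mul_exp_neg_sum_eq_prod [DecidableEq ι] (x : ι → ℝ) (i : ι) :
    |x i| ^ d * exp (-∑ j, |x j| ^ d) =
      ∏ j, |x j| ^ (Pi.single i d : ι → ℝ) j * exp (-|x j| ^ d) := by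
  rw [Finset.prod_mul_distrib, ← exp_sum, Finset.sum_neg_distrib,
    Finset.prod_eq_single i (fun j _ hj => by simp [hj]) (by simp)]
  simp

theorem prod_two_div_mul_Gamma_single [DecidableEq ι] (hd : 0 < d) (i : ι) :
    ∏ j, 2 / d * Gamma (((Pi.single i d : ι → ℝ) j + 1) / d) =
      (2 / d * Gamma (1 / d)) ^ Fintype.card ι / d := by
  have hfactor : ∀ j, 2 / d * Gamma (((Pi.single i d : ι → ℝ) j + 1) / d) =
      2 / d * Gamma (1 / d) * if j = i then d⁻¹ else 1 := fun j => by
    rcases eq_or_ne j i with rfl | hj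
    · rw [Pi.single_eq_same, if_pos rfl, add_div, div_self hd.ne', add_comm,
        Gamma_add_one (by positivity)]
      ring
    · simp [hj]
  rw [Finset.prod_congr rfl fun j _ => hfactor j, Finset.prod_mul_distrib, Finset.prod_const,
    Finset.prod_ite_eq', if_pos (Finset.mem_univ i), Finset.card_univ, ← div_eq_mul_inv]

theorem lintegral_abs_rpow_mul_exp_neg_sum_abs_rpow [DecidableEq ι] (hd : 0 < d) (i : ι) :
    ∫⁻ x : ι → ℝ, ENNReal.ofReal (|x i| ^ d) * ENNReal.ofReal (exp (-∑ j, |x j| ^ d)) =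
      ENNReal.ofReal ((2 / d * Gamma (1 / d)) ^ Fintype.card ι / d) := by
  have hq : ∀ j, -1 < (Pi.single i d : ι → ℝ) j :=
    fun j => neg_one_lt_zero.trans_le (Pi.single_nonneg.mpr hd.le j : (0 : ι → ℝ) j ≤ _)
  simp_rw [← ofReal_mul (rpow_nonneg (abs_nonneg _) _), abs_rpow_mul_exp_neg_sum_eq_prod _ i]
  have hint : Integrable fun x : ι → ℝ =>
      ∏ j, |x j| ^ (Pi.single i d : ι → ℝ) j * exp (-|x j| ^ d) :=
    Integrable.fintype_prod fun j => integrable_abs_rpow_mul_exp_neg_abs_rpow hd (hq j)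
  rw [← ofReal_integral_eq_lintegral_ofReal hint
      (.of_forall fun x => Finset.prod_nonneg fun j _ => by positivity),
    integral_prod_abs_rpow_mul_exp_neg_abs_rpow hd hq, prod_two_div_mul_Gamma_single hd]

theorem lintegral_abs_rpow_mul_exp_neg_sum_abs_rpow_eq_Gamma_mul (hd : 0 < d) (i : ι) :
    ∫⁻ x : ι → ℝ, ENNReal.ofReal (|x i| ^ d) * ENNReal.ofReal (exp (-∑ j, |x j| ^ d)) =
      ENNReal.ofReal (Gamma ((Fintype.card ι + d) / d + 1)) *
        ∫⁻ x in {x : ι → ℝ | ∑ j, |x j| ^ d ≤ 1}, ENNReal.ofReal (|x i| ^ d) := by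
  have habs : ∀ {c : ℝ}, 0 < c → ∀ a : ℝ, |c * a| ^ d = c ^ d * |a| ^ d := fun hc a => by
    rw [abs_mul, abs_of_pos hc, mul_rpow hc.le (abs_nonneg a)]
  have h := lintegral_mul_ofReal_exp_neg_eq_Gamma_mul (volume : Measure (ι → ℝ))
    (ρ := fun x => ∑ j, |x j| ^ d) (g := fun x => ENNReal.ofReal (|x i| ^ d)) (k := d)
    hd (by fun_prop) (fun x => Finset.sum_nonneg fun j _ => by positivity)
    (fun c hc x => by simp only [Pi.smul_apply, smul_eq_mul, habs hc, Finset.mul_sum])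
    (by fun_prop) (fun c hc x => by
      rw [Pi.smul_apply, smul_eq_mul, habs hc, ofReal_mul (by positivity)])
    (neg_one_lt_zero.trans_le (by positivity))
  rwa [Module.finrank_fintype_fun_eq_card] at h

theorem integral_abs_rpow_over_sum_abs_rpow_le_one (hd : 0 < d) (i : ι) :
    ∫ x in {x : ι → ℝ | ∑ j, |x j| ^ d ≤ 1}, |x i| ^ d =
      (2 / d * Gamma (1 / d)) ^ Fintype.card ι / d / Gamma ((Fintype.card ι + d) / d + 1) := by
  classical
  have hΓ : 0 < Gamma ((Fintype.card ι + d) / d + 1) := Gamma_pos_of_pos (by positivity)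
  have h := (lintegral_abs_rpow_mul_exp_neg_sum_abs_rpow hd i).symm.trans
    (lintegral_abs_rpow_mul_exp_neg_sum_abs_rpow_eq_Gamma_mul hd i)
  rw [integral_eq_lintegral_of_nonneg_ae (.of_forall fun x => by positivity)
      (by fun_prop : Measurable _).aestronglyMeasurable, eq_div_iff hΓ.ne', mul_comm,
    ← toReal_ofReal hΓ.le, ← toReal_mul, ← h, toReal_ofReal (by positivity)]

end Product

theorem integral_abs_pow_over_Lp_unit_ball
    (n : ℕ) (d : ℝ) (hd : 0 < d) (i : Fin n) :
    ∫ x in {x : Fin n → ℝ | ∑ j, |x j| ^ d ≤ 1}, |x i| ^ d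
      = (2 ^ n / (n * (n + d) * d ^ (n - 1))) *
          Real.Gamma (1 / d) ^ n / Real.Gamma (n / d) := by
  rw [integral_abs_rpow_over_sum_abs_rpow_le_one hd i, Fintype.card_fin]
  obtain ⟨m, rfl⟩ : ∃ m, n = m + 1 := Nat.exists_eq_add_one.mpr i.pos
  have hΓ : Gamma (((m + 1 : ℕ) + d) / d + 1) =
      ((m + 1 : ℕ) + d) / d * ((m + 1 : ℕ) / d) * Gamma ((m + 1 : ℕ) / d) := by
    rw [add_div, div_self hd.ne', Gamma_add_one (by positivity), Gamma_add_one (by positivity)]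
    ring
  rw [hΓ, Nat.add_sub_cancel, mul_pow, div_pow, pow_succ d m]
  push_cast
  field_simp
end

section
/- For every positive real d and every i ∈ {1,…,n}, ∫_{B_d} |x_i|^d dx = vol(B_d)/(n+d), where B_d = {x ∈ R^n : Σ_j |x_j|^d ≤ 1}. -/
/-!
Write `g x = ∑ j, |x j| ^ d` and `B = {g ≤ 1}`. Swapping two coordinates preserves `B` and
Lebesgue measure, so `n * ∫_B |x_i|^d = ∫_B g`. Since `g` is positively homogeneous of degree
`d`, `{g ≤ t} = t^(1/d) • B` has volume `t^(n/d) vol B`, and the layer-cake formula gives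
`∫_B g = ∫_0^1 vol B (1 - t^(n/d)) dt = n/(n+d) vol B`.
-/

open MeasureTheory Real Set Pointwise Module

lemma integral_one_sub_rpow {p : ℝ} (hp : -1 < p) :
    ∫ t in (0:ℝ)..1, (1 - t ^ p) = p / (p + 1) := by
  have hp1 : p + 1 ≠ 0 := by linarith
  rw [intervalIntegral.integral_sub intervalIntegrable_const
      (intervalIntegral.intervalIntegrable_rpow' hp), integral_rpow (Or.inl hp),
    intervalIntegral.integral_const, one_rpow, zero_rpow hp1]
  field_simp
  ring

lemma smul_setOf_le_one_eq_setOf_le {E : Type*} [AddCommGroup E] [Module ℝ E] {g : E → ℝ}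
    {d : ℝ} (hd : 0 < d) (hg : ∀ c : ℝ, 0 < c → ∀ x, g (c • x) = c ^ d * g x)
    {t : ℝ} (ht : 0 < t) :
    t ^ d⁻¹ • {x | g x ≤ 1} = {x | g x ≤ t} := by
  have hr : 0 < t ^ d⁻¹ := rpow_pos_of_pos ht _
  ext x
  rw [mem_smul_set_iff_inv_smul_mem₀ hr.ne', mem_ofPred_eq, mem_ofPred_eq,
    hg _ (inv_pos.2 hr), inv_rpow hr.le, ← rpow_mul ht.le, inv_mul_cancel₀ hd.ne', rpow_one,
    inv_mul_le_one₀ ht]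

section Homogeneous

variable {E : Type*} [NormedAddCommGroup E] [NormedSpace ℝ E] [FiniteDimensional ℝ E]
  [MeasurableSpace E] [BorelSpace E] (μ : Measure E) [μ.IsAddHaarMeasure]
  {g : E → ℝ} {d : ℝ}

lemma addHaar_setOf_le_of_homogeneous (hd : 0 < d)
    (hg : ∀ c : ℝ, 0 < c → ∀ x, g (c • x) = c ^ d * g x) {t : ℝ} (ht : 0 < t) :
    μ {x | g x ≤ t} = ENNReal.ofReal (t ^ (finrank ℝ E / d)) * μ {x | g x ≤ 1} := by
  rw [← smul_setOf_le_one_eq_setOf_le hd hg ht, Measure.addHaar_smul,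
    abs_of_nonneg (by positivity), ← rpow_natCast, ← rpow_mul ht.le, inv_mul_eq_div]

lemma measureReal_restrict_setOf_lt_of_homogeneous (hd : 0 < d)
    (hg : ∀ c : ℝ, 0 < c → ∀ x, g (c • x) = c ^ d * g x) (hgm : Measurable g)
    (hfin : μ {x | g x ≤ 1} ≠ ⊤) {t : ℝ} (ht : t ∈ Ioc 0 1) :
    (μ.restrict {x | g x ≤ 1}).real {x | t < g x}
      = μ.real {x | g x ≤ 1} * (1 - t ^ (finrank ℝ E / d)) := by
  have hsdiff : {x | t < g x} ∩ {x | g x ≤ 1} = {x | g x ≤ 1} \ {x | g x ≤ t} := by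
    ext x
    simp only [mem_inter_iff, mem_sdiff, mem_ofPred_eq, not_le]
    tauto
  have hsub : {x | g x ≤ t} ⊆ {x | g x ≤ 1} := fun x hx => le_trans hx ht.2
  rw [measureReal_restrict_apply (measurableSet_lt measurable_const hgm), hsdiff,
    measureReal_sdiff hsub (measurableSet_le hgm measurable_const) hfin,
    measureReal_def μ {x | g x ≤ t}, addHaar_setOf_le_of_homogeneous μ hd hg ht.1,
    ENNReal.toReal_mul, ENNReal.toReal_ofReal (rpow_nonneg ht.1.le _), ← measureReal_def]
  ring

theorem setIntegral_setOf_le_one_of_homogeneous (hd : 0 < d)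
    (hg : ∀ c : ℝ, 0 < c → ∀ x, g (c • x) = c ^ d * g x) (hg0 : ∀ x, 0 ≤ g x)
    (hgm : Measurable g) (hfin : μ {x | g x ≤ 1} ≠ ⊤) :
    ∫ x in {x | g x ≤ 1}, g x ∂μ
      = finrank ℝ E / (finrank ℝ E + d) * μ.real {x | g x ≤ 1} := by
  set p : ℝ := finrank ℝ E / d with hp_def
  have hB : MeasurableSet {x | g x ≤ 1} := measurableSet_le hgm measurable_const
  have hint : IntegrableOn g {x | g x ≤ 1} μ := by
    refine Measure.integrableOn_of_bounded (M := 1) hfin hgm.aestronglyMeasurable ?_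
    filter_upwards [ae_restrict_mem hB] with x hx
    rwa [norm_of_nonneg (hg0 x)]
  have hvanish :
      ∀ t ∈ Ioi (0:ℝ) \ Ioc 0 1, (μ.restrict {x | g x ≤ 1}).real {x | t < g x} = 0 := by
    intro t ht
    have ht1 : 1 < t := by simp_all
    rw [measureReal_restrict_apply (measurableSet_lt measurable_const hgm)]
    convert measureReal_empty (μ := μ)
    ext x
    simp only [mem_inter_iff, mem_ofPred_eq, mem_empty_iff_false, iff_false, not_and, not_le]
    intro hx
    linarith
  have hp : finrank ℝ E / (finrank ℝ E + d) = p / (p + 1) := by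
    rw [hp_def]
    field_simp
  calc ∫ x in {x | g x ≤ 1}, g x ∂μ
      = ∫ t in Ioi 0, (μ.restrict {x | g x ≤ 1}).real {x | t < g x} :=
        hint.integral_eq_integral_meas_lt (.of_forall hg0)
    _ = ∫ t in Ioc 0 1, μ.real {x | g x ≤ 1} * (1 - t ^ p) := by
        rw [setIntegral_eq_of_subset_of_forall_sdiff_eq_zero measurableSet_Ioi
          Ioc_subset_Ioi_self hvanish]
        exact setIntegral_congr_fun measurableSet_Ioc
          (fun t ht => measureReal_restrict_setOf_lt_of_homogeneous μ hd hg hgm hfin ht)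
    _ = finrank ℝ E / (finrank ℝ E + d) * μ.real {x | g x ≤ 1} := by
        rw [← intervalIntegral.integral_of_le zero_le_one, intervalIntegral.integral_const_mul,
          integral_one_sub_rpow (by linarith [show 0 ≤ p by positivity]), hp, mul_comm]

end Homogeneous

lemma setIntegral_comp_apply_eq_of_swap_invariant {ι α F : Type*} [Fintype ι] [DecidableEq ι]
    [MeasureSpace α] [SigmaFinite (volume : Measure α)]
    [NormedAddCommGroup F] [NormedSpace ℝ F]
    {S : Set (ι → α)} (f : α → F) (i j : ι) (hS : ∀ x, x ∘ Equiv.swap i j ∈ S ↔ x ∈ S) :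
    ∫ x in S, f (x i) = ∫ x in S, f (x j) := by
  have hpre : (MeasurableEquiv.piCongrLeft (fun _ => α) (Equiv.swap i j)).symm ⁻¹' S = S :=
    Set.ext hS
  have hchange := (volume_measurePreserving_piCongrLeft (fun _ => α) (Equiv.swap i j)).symm
    |>.setIntegral_preimage_emb (MeasurableEquiv.measurableEmbedding _) (fun x => f (x i)) S
  rw [hpre] at hchange
  refine hchange.symm.trans (integral_congr_ae (.of_forall fun x => ?_))
  exact congrArg (f ∘ x) (Equiv.swap_apply_left i j)

section LpBall

variable {ι : Type*} [Fintype ι] {d : ℝ}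

lemma continuous_sum_abs_rpow (hd : 0 ≤ d) : Continuous fun x : ι → ℝ => ∑ j, |x j| ^ d :=
  continuous_finsetSum _ fun j _ => (continuous_apply j).abs.rpow_const fun _ => Or.inr hd

lemma sum_abs_rpow_smul {c : ℝ} (hc : 0 ≤ c) (x : ι → ℝ) :
    ∑ j, |(c • x) j| ^ d = c ^ d * ∑ j, |x j| ^ d := by
  simp only [Pi.smul_apply, smul_eq_mul, abs_mul, abs_of_nonneg hc,
    mul_rpow hc (abs_nonneg _), Finset.mul_sum]

lemma abs_rpow_le_sum_abs_rpow (x : ι → ℝ) (i : ι) : |x i| ^ d ≤ ∑ j, |x j| ^ d :=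
  Finset.single_le_sum (fun j _ => rpow_nonneg (abs_nonneg (x j)) d) (Finset.mem_univ i)

lemma volume_setOf_sum_abs_rpow_le_one_ne_top (hd : 0 < d) :
    volume {x : ι → ℝ | ∑ j, |x j| ^ d ≤ 1} ≠ ⊤ := by
  refine (measure_mono (t := Metric.closedBall 0 1) fun x hx => ?_)
    |>.trans_lt measure_closedBall_lt_top |>.ne
  exact mem_closedBall_zero_iff.2 <| (pi_norm_le_iff_of_nonneg zero_le_one).2 fun j =>
    (rpow_le_rpow_iff (abs_nonneg _) zero_le_one hd).1 <|
      (one_rpow d).symm ▸ (abs_rpow_le_sum_abs_rpow x j).trans hx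

lemma integrableOn_abs_rpow_setOf_sum_abs_rpow_le_one (hd : 0 < d) (i : ι) :
    IntegrableOn (fun x : ι → ℝ => |x i| ^ d) {x | ∑ j, |x j| ^ d ≤ 1} := by
  refine Measure.integrableOn_of_bounded (M := 1) (volume_setOf_sum_abs_rpow_le_one_ne_top hd)
    ((continuous_apply i).abs.rpow_const fun _ => Or.inr hd.le).aestronglyMeasurable ?_
  filter_upwards [ae_restrict_mem (measurableSet_le
    (continuous_sum_abs_rpow hd.le).measurable measurable_const)] with x hx
  rw [norm_of_nonneg (rpow_nonneg (abs_nonneg _) d)]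
  exact (abs_rpow_le_sum_abs_rpow x i).trans hx

lemma setIntegral_sum_abs_rpow_setOf_sum_abs_rpow_le_one (hd : 0 < d) :
    ∫ x in {x : ι → ℝ | ∑ j, |x j| ^ d ≤ 1}, ∑ j, |x j| ^ d
      = Fintype.card ι / (Fintype.card ι + d)
        * volume.real {x : ι → ℝ | ∑ j, |x j| ^ d ≤ 1} := by
  rw [← finrank_fintype_fun_eq_card (R := ℝ)]
  exact setIntegral_setOf_le_one_of_homogeneous (g := fun x : ι → ℝ => ∑ j, |x j| ^ d)
    volume hd
    (fun c hc x => sum_abs_rpow_smul hc.le x)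
    (fun x => Finset.sum_nonneg fun j _ => rpow_nonneg (abs_nonneg (x j)) d)
    (continuous_sum_abs_rpow hd.le).measurable (volume_setOf_sum_abs_rpow_le_one_ne_top hd)

lemma setIntegral_sum_abs_rpow_eq_card_mul (hd : 0 < d) (i : ι) :
    ∫ x in {x : ι → ℝ | ∑ j, |x j| ^ d ≤ 1}, ∑ j, |x j| ^ d
      = Fintype.card ι * ∫ x in {x : ι → ℝ | ∑ j, |x j| ^ d ≤ 1}, |x i| ^ d := by
  classical
  rw [integral_finsetSum _ fun j _ => integrableOn_abs_rpow_setOf_sum_abs_rpow_le_one hd j,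
    Finset.sum_congr rfl fun j _ => setIntegral_comp_apply_eq_of_swap_invariant
      (fun t => |t| ^ d) j i fun x => ?_]
  · rw [Finset.sum_const, Finset.card_univ, nsmul_eq_mul]
  · simp only [mem_ofPred_eq, Function.comp_apply]
    rw [Equiv.sum_comp (Equiv.swap j i) fun k => |x k| ^ d]

end LpBall

theorem integral_abs_pow_over_Lp_unit_ball_eq_volume_div
    (n : ℕ) (d : ℝ) (hd : 0 < d) (i : Fin n) :
    ∫ x in {x : Fin n → ℝ | ∑ j, |x j| ^ d ≤ 1}, |x i| ^ d
      = (volume {x : Fin n → ℝ | ∑ j, |x j| ^ d ≤ 1}).toReal / (n + d) := by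
  have hhom := setIntegral_sum_abs_rpow_setOf_sum_abs_rpow_le_one (ι := Fin n) hd
  rw [setIntegral_sum_abs_rpow_eq_card_mul hd i, Fintype.card_fin, measureReal_def] at hhom
  have hn : (n : ℝ) ≠ 0 := Nat.cast_ne_zero.2 i.pos.ne'
  refine mul_left_cancel₀ hn (hhom.trans ?_)
  ring
end

section
/- If g is a homogeneous polynomial of even degree d in n variables with fewer than n nonzero coefficients (in the monomial basis), then the sublevel set G = {x ∈ R^n : g(x) ≤ 1} has infinite Lebesgue volume. -/
/-! The exponent vectors of `g` are fewer than `n`, so some nonzero `t ∈ ℝⁿ` is orthogonal to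
all of them, and then every monomial of `g`, hence `g` itself, is invariant under the diagonal
scalings `xᵢ ↦ e^{k tᵢ} xᵢ`. As `g(0) = 0`, the sublevel set contains a small box
`[a, 2a]ⁿ`; its images under the scalings `k = 0, 1, 2, …` lie in the sublevel set, are pairwise
disjoint once `|t i₀| = 1` (because `2 < e`), and have volume at least that of the box once
`∑ tᵢ ≥ 0`. -/

open MeasureTheory MvPolynomial Function Set Real

namespace Matrix

theorem exists_mulVec_eq_zero_of_card_lt {m n K : Type*} [Fintype m] [Fintype n] [Field K]
    (M : Matrix m n K) (h : Fintype.card m < Fintype.card n) : ∃ v ≠ 0, M *ᵥ v = 0 := by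
  obtain ⟨v, hv, hv0⟩ := Submodule.exists_mem_ne_zero_of_ne_bot
    (LinearMap.ker_ne_bot_of_finrank_lt (f := M.mulVecLin) (by simpa using h))
  exact ⟨v, hv0, hv⟩

theorem exists_mulVec_eq_zero_sum_nonneg_abs_eq_one {m n : Type*} [Fintype m] [Fintype n]
    (M : Matrix m n ℝ) (h : Fintype.card m < Fintype.card n) :
    ∃ v, M *ᵥ v = 0 ∧ 0 ≤ ∑ i, v i ∧ ∃ i, |v i| = 1 := by
  obtain ⟨v, hv0, hMv⟩ := M.exists_mulVec_eq_zero_of_card_lt h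
  obtain ⟨i, hi⟩ := Function.ne_iff.mp hv0
  have hscale (c : ℝ) : M *ᵥ (c • v) = 0 := by rw [mulVec_smul, hMv, smul_zero]
  have habs : 0 < |v i| := abs_pos.mpr hi
  rcases le_total 0 (∑ j, v j) with hsum | hsum
  · refine ⟨|v i|⁻¹ • v, hscale _, ?_, i, by simp [abs_mul, habs.ne']⟩
    simpa [← Finset.mul_sum] using mul_nonneg (inv_nonneg.mpr habs.le) hsum
  · refine ⟨(-|v i|⁻¹) • v, hscale _, ?_, i, by simp [abs_mul, habs.ne']⟩
    simpa [← Finset.mul_sum] using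
      mul_nonneg_of_nonpos_of_nonpos (neg_nonpos.mpr (inv_nonneg.mpr habs.le)) hsum

end Matrix

namespace MvPolynomial

theorem eval_mul_eq_of_prod_pow_eq_one {R σ : Type*} [CommSemiring R] [Fintype σ]
    {g : MvPolynomial σ R} {u : σ → R} (hu : ∀ α ∈ g.support, ∏ i, u i ^ α i = 1)
    (x : σ → R) : eval (u * x) g = eval x g := by
  simp only [eval_eq', Pi.mul_apply, mul_pow, Finset.prod_mul_distrib]
  exact Finset.sum_congr rfl fun α hα => by rw [hu α hα, one_mul]

theorem eval_exp_mul_eq {σ : Type*} [Fintype σ] {g : MvPolynomial σ ℝ} {t : σ → ℝ}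
    (ht : ∀ α ∈ g.support, ∑ i, (α i : ℝ) * t i = 0) (s : ℝ) (x : σ → ℝ) :
    eval (fun i => exp (s * t i) * x i) g = eval x g := by
  refine eval_mul_eq_of_prod_pow_eq_one (u := fun i => exp (s * t i)) (fun α hα => ?_) x
  rw [← exp_zero, ← mul_zero s, ← ht α hα, Finset.mul_sum, exp_sum]
  exact Finset.prod_congr rfl fun i _ => by rw [← exp_nat_mul]; ring_nf

end MvPolynomial

theorem exists_pi_Icc_subset_of_mem_nhds_zero {ι : Type*} [Fintype ι] {s : Set (ι → ℝ)}
    (hs : s ∈ nhds 0) : ∃ a > 0, univ.pi (fun _ => Icc a (2 * a)) ⊆ s := by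
  obtain ⟨ε, hε, hball⟩ := Metric.mem_nhds_iff.mp hs
  refine ⟨ε / 4, by positivity, fun x hx => hball ?_⟩
  rw [mem_ball_zero_iff, pi_norm_lt_iff hε]
  intro i
  obtain ⟨hlo, hhi⟩ := hx i trivial
  rw [norm_eq_abs, abs_lt]
  constructor <;> linarith

theorem Real.disjoint_Icc_exp_mul {a b r : ℝ} (ha : 0 < a) (hb : b < exp |r| * a)
    {k l : ℕ} (hkl : k ≠ l) :
    Disjoint (Icc (exp (k * r) * a) (exp (k * r) * b))
      (Icc (exp (l * r) * a) (exp (l * r) * b)) := by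
  have hshift {m m' : ℕ} {x : ℝ} (hm : exp (m * r) * a ≤ x) (hm' : x ≤ exp (m' * r) * b) :
      exp ((m - m') * r) * a ≤ b :=
    calc exp ((m - m') * r) * a = exp (-(m' * r)) * (exp (m * r) * a) := by
          rw [← mul_assoc, ← exp_add]; ring_nf
      _ ≤ exp (-(m' * r)) * (exp (m' * r) * b) :=
          mul_le_mul_of_nonneg_left (hm.trans hm') (exp_pos _).le
      _ = b := by rw [← mul_assoc, ← exp_add]; simp
  have hstep : (1 : ℝ) ≤ |(k : ℝ) - l| := by
    have : (1 : ℤ) ≤ |(k : ℤ) - l| := Int.one_le_abs (sub_ne_zero.mpr (by exact_mod_cast hkl))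
    exact_mod_cast this
  have hr : |r| ≤ |((k : ℝ) - l) * r| := by
    rw [abs_mul]
    exact le_mul_of_one_le_left (abs_nonneg r) hstep
  rw [Set.disjoint_left]
  rintro x ⟨hk₁, hk₂⟩ ⟨hl₁, hl₂⟩
  rcases le_abs.mp hr with h | h
  · nlinarith [hshift hk₁ hl₂, exp_le_exp.mpr h]
  · rw [← neg_mul, neg_sub] at h
    nlinarith [hshift hl₁ hk₂, exp_le_exp.mpr h]

theorem ofReal_le_volume_pi_Icc_exp_mul {ι : Type*} [Fintype ι] {a b s : ℝ} {t : ι → ℝ}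
    (hab : a ≤ b) (hs : 0 ≤ s * ∑ i, t i) :
    ENNReal.ofReal ((b - a) ^ Fintype.card ι) ≤
      volume (univ.pi fun i => Icc (exp (s * t i) * a) (exp (s * t i) * b)) := by
  rw [volume_pi_pi]
  simp_rw [volume_Icc, ← mul_sub]
  rw [← ENNReal.ofReal_prod_of_nonneg fun i _ => mul_nonneg (exp_pos _).le (sub_nonneg.mpr hab)]
  apply ENNReal.ofReal_le_ofReal
  rw [Finset.prod_mul_distrib, Finset.prod_const, ← exp_sum, ← Finset.mul_sum, Finset.card_univ]
  exact le_mul_of_one_le_left (pow_nonneg (sub_nonneg.mpr hab) _) (one_le_exp hs)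

theorem MeasureTheory.measure_eq_top_of_pairwise_disjoint {α ι : Type*} [MeasurableSpace α]
    [Infinite ι] (μ : Measure α) {s : Set α} {S : ι → Set α} {c : ENNReal} (hc : c ≠ 0)
    (hS : ∀ k, S k ⊆ s) (hmeas : ∀ k, MeasurableSet (S k)) (hdisj : Pairwise (Disjoint on S))
    (hle : ∀ k, c ≤ μ (S k)) : μ s = ⊤ :=
  top_le_iff.mp <| calc
    ⊤ = ∑' _ : ι, c := (ENNReal.tsum_const_eq_top_of_ne_zero hc).symm
    _ ≤ ∑' k, μ (S k) := ENNReal.tsum_le_tsum hle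
    _ ≤ μ (⋃ k, S k) := tsum_meas_le_meas_iUnion_of_disjoint μ hmeas hdisj
    _ ≤ μ s := measure_mono (iUnion_subset hS)

theorem volume_sublevel_eq_top_of_orthogonal {ι : Type*} [Fintype ι] {g : MvPolynomial ι ℝ}
    (hg0 : eval 0 g < 1) {t : ι → ℝ} (ht : ∀ α ∈ g.support, ∑ i, (α i : ℝ) * t i = 0)
    (hsum : 0 ≤ ∑ i, t i) {i₀ : ι} (hi₀ : |t i₀| = 1) :
    volume {x : ι → ℝ | eval x g ≤ 1} = ⊤ := by
  obtain ⟨a, ha, hbox⟩ := exists_pi_Icc_subset_of_mem_nhds_zero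
    ((isOpen_lt (continuous_eval g) continuous_const).mem_nhds hg0)
  refine measure_eq_top_of_pairwise_disjoint volume
    (S := fun k : ℕ => univ.pi fun i => Icc (exp (k * t i) * a) (exp (k * t i) * (2 * a)))
    (ENNReal.ofReal_pos.mpr (pow_pos (by linarith) _)).ne' (fun k x hx => ?_)
    (fun k => .univ_pi fun i => measurableSet_Icc) (fun k l hkl => ?_)
    (fun k => ofReal_le_volume_pi_Icc_exp_mul (by linarith) (mul_nonneg k.cast_nonneg hsum))
  · set y : ι → ℝ := fun i => exp (-(k * t i)) * x i
    have hy : y ∈ univ.pi fun _ => Icc a (2 * a) := fun i _ => by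
      obtain ⟨hlo, hhi⟩ := hx i trivial
      have he := exp_pos (k * t i)
      simp only [y, exp_neg]
      exact ⟨(le_inv_mul_iff₀ he).mpr hlo, (inv_mul_le_iff₀ he).mpr hhi⟩
    calc eval x g = eval (fun i => exp (k * t i) * y i) g := by
          simp only [y, ← mul_assoc, ← exp_add, add_neg_cancel, exp_zero, one_mul]
      _ = eval y g := eval_exp_mul_eq ht k y
      _ ≤ 1 := (hbox hy).le
  · refine disjoint_univ_pi.mpr ⟨i₀, disjoint_Icc_exp_mul ha ?_ hkl⟩
    rw [hi₀]
    nlinarith [exp_one_gt_d9]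

theorem sparse_homogeneous_sublevel_infinite_volume_general
    (n d : ℕ) (hd0 : 2 ≤ d)
    (g : MvPolynomial (Fin n) ℝ) (hg : g.IsHomogeneous d)
    (hsparse : g.support.card < n) :
    volume {x : Fin n → ℝ | eval x g ≤ 1} = ⊤ := by
  obtain ⟨t, ht, hsum, i₀, hi₀⟩ := Matrix.exists_mulVec_eq_zero_sum_nonneg_abs_eq_one
    (Matrix.of fun (α : g.support) i => (α.1 i : ℝ)) (by simpa using hsparse)
  have hg0 : eval 0 g = 0 := by
    rw [eval_zero, constantCoeff_eq, hg.coeff_eq_zero (by simp; omega)]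
  exact volume_sublevel_eq_top_of_orthogonal (by rw [hg0]; exact one_pos)
    (fun α hα => congrFun ht ⟨α, hα⟩) hsum hi₀

theorem sparse_homogeneous_sublevel_infinite_volume
    (n d : ℕ) (hd : Even d) (hd0 : 2 ≤ d)
    (g : MvPolynomial (Fin n) ℝ) (hg : g.IsHomogeneous d)
    (hsparse : g.support.card < n) :
    volume {x : Fin n → ℝ | eval x g ≤ 1} = ⊤ :=
  sparse_homogeneous_sublevel_infinite_volume_general n d hd0 g hg hsparse
end

section
/- The polynomial g*(x) = Σ_{i=1}^n x_i^d (d an even positive integer) is the unique minimizer of the ℓ1-norm ‖g‖₁ = Σ_α |g_α| over all homogeneous polynomials g of degree d in n variables whose sublevel set {x : g(x) ≤ 1} has Lebesgue volume at most vol(B_d), where B_d = {x : Σ_i x_i^d ≤ 1}. -/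
/-!
Bound every monomial of `g` by weighted AM-GM: `|x^α| ≤ ∑ (α i / d) x i ^ d`. This gives
`g(x) ≤ ∑ c i * x i ^ d` with nonnegative weights `c i` summing to `‖g‖₁`, so the sublevel set
of the diagonal form `∑ c i * x i ^ d` lies inside that of `g` and has volume at most `vol B_d`.
Rescaling the coordinates by `c i ^ (1 / d)` shows this volume is `vol B_d / (∏ c i) ^ (1 / d)`,
whence `∏ c i ≥ 1`, and AM-GM gives `‖g‖₁ = ∑ c i ≥ n`, with equality only if every `c i = 1`.
In that case `g ≤ ∑ x i ^ d` pointwise while the sublevel sets have the same volume; the open set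
`{g < 1 < ∑ x i ^ d}` is then null, hence empty, and homogeneity forces `g = ∑ x i ^ d`.
-/

open MeasureTheory MvPolynomial

lemma abs_prod_pow_le_sum_div_mul_pow {ι : Type*} [Fintype ι] {d : ℕ} (hd : Even d)
    (hd0 : d ≠ 0) (α : ι → ℕ) (hα : ∑ i, α i = d) (x : ι → ℝ) :
    |∏ i, x i ^ α i| ≤ ∑ i, (α i / d : ℝ) * x i ^ d := by
  have hd' : (d : ℝ) ≠ 0 := Nat.cast_ne_zero.mpr hd0
  calc |∏ i, x i ^ α i| = ∏ i, (|x i| ^ d) ^ (α i / d : ℝ) := by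
        rw [Finset.abs_prod]
        refine Finset.prod_congr rfl fun i _ => ?_
        rw [← Real.rpow_natCast_mul (abs_nonneg _), mul_div_cancel₀ _ hd', Real.rpow_natCast,
          abs_pow]
    _ ≤ ∑ i, (α i / d : ℝ) * |x i| ^ d :=
        Real.geom_mean_le_arith_mean_weighted _ _ _ (fun i _ => by positivity)
          (by rw [← Finset.sum_div, ← Nat.cast_sum, hα, div_self hd']) (fun i _ => by positivity)
    _ = ∑ i, (α i / d : ℝ) * x i ^ d := by simp_rw [hd.pow_abs]

lemma eq_one_of_one_le_prod_of_sum_le_card {ι : Type*} [Fintype ι] {c : ι → ℝ}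
    (hc : ∀ i, 0 ≤ c i) (hprod : 1 ≤ ∏ i, c i) (hsum : ∑ i, c i ≤ Fintype.card ι) (i : ι) :
    c i = 1 := by
  by_contra hi
  have hpos : ∀ j, 0 < c j := fun j => (hc j).lt_of_ne fun h => by
    rw [Finset.prod_eq_zero (Finset.mem_univ j) h.symm] at hprod
    exact zero_lt_one.not_ge hprod
  -- `t ≤ exp (t - 1)`, strictly unless `t = 1`
  have hlt : ∏ j, c j < ∏ j, Real.exp (c j - 1) :=
    Finset.prod_lt_prod (fun j _ => hpos j)
      (fun j _ => by linarith [Real.add_one_le_exp (c j - 1)])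
      ⟨i, Finset.mem_univ i, by linarith [Real.add_one_lt_exp (sub_ne_zero.mpr hi)]⟩
  have hexp : ∏ j, Real.exp (c j - 1) ≤ 1 := by
    rw [← Real.exp_sum, Real.exp_le_one_iff, Finset.sum_sub_distrib]
    simpa using hsum
  linarith

section SublevelVolume

variable {ι : Type*} [Fintype ι] {d : ℕ}

lemma volume_sum_pow_le_one_pos (hd0 : d ≠ 0) :
    0 < volume {x : ι → ℝ | ∑ i, x i ^ d ≤ 1} := by
  have hcont : Continuous fun x : ι → ℝ => ∑ i, x i ^ d := by fun_prop
  refine ((isOpen_lt hcont continuous_const).measure_pos volume ⟨0, ?_⟩).trans_le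
    (measure_mono (Set.ofPred_subset_ofPred.mpr fun _ hx => hx.le))
  simp [zero_pow hd0]

lemma volume_sum_pow_le_one_lt_top (hd : Even d) (hd0 : d ≠ 0) :
    volume {x : ι → ℝ | ∑ i, x i ^ d ≤ 1} < ⊤ := by
  refine (measure_mono fun x hx => ?_).trans_lt
    (isCompact_closedBall (0 : ι → ℝ) 1).measure_lt_top
  rw [mem_closedBall_zero_iff, pi_norm_le_iff_of_nonneg zero_le_one]
  intro i
  have hxi : x i ^ d ≤ 1 :=
    (Finset.single_le_sum (fun j _ => hd.pow_nonneg (x j)) (Finset.mem_univ i)).trans hx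
  rw [← hd.pow_abs, pow_le_one_iff_of_nonneg (abs_nonneg _) hd0] at hxi
  rwa [Real.norm_eq_abs]

lemma volume_preimage_mul_pi (b : ι → ℝ) (hb : ∀ i, b i ≠ 0) (s : Set (ι → ℝ)) :
    volume ((b * ·) ⁻¹' s) = ENNReal.ofReal |(∏ i, b i)⁻¹| * volume s := by
  classical
  have hmap : (b * ·) = ⇑(Matrix.toLin' (Matrix.diagonal b)) := by
    ext x i
    simp [Matrix.mulVec_diagonal]
  have hdet : LinearMap.det (Matrix.toLin' (Matrix.diagonal b)) = ∏ i, b i := by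
    rw [LinearMap.det_toLin', Matrix.det_diagonal]
  rw [hmap, Measure.addHaar_preimage_linearMap _
    (hdet ▸ Finset.prod_ne_zero_iff.mpr fun i _ => hb i), hdet]

lemma volume_sum_pow_le_one_lt_of_prod_lt_one (hd : Even d) (hd0 : d ≠ 0) {c : ι → ℝ}
    (hc : ∀ i, 0 < c i) (hprod : ∏ i, c i < 1) :
    volume {x : ι → ℝ | ∑ i, x i ^ d ≤ 1} < volume {x : ι → ℝ | ∑ i, c i * x i ^ d ≤ 1} := by
  set b : ι → ℝ := fun i => c i ^ (d⁻¹ : ℝ)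
  have hbd : ∀ i, b i ^ d = c i := fun i => Real.rpow_inv_natCast_pow (hc i).le hd0
  have hb : ∀ i, 0 < b i := fun i => Real.rpow_pos_of_pos (hc i) _
  have hset : {x : ι → ℝ | ∑ i, c i * x i ^ d ≤ 1} = (b * ·) ⁻¹' {x | ∑ i, x i ^ d ≤ 1} := by
    ext x
    simp [mul_pow, hbd]
  have hB : 0 < ∏ i, b i := Finset.prod_pos fun i _ => hb i
  have hB1 : ∏ i, b i < 1 := by
    rw [← pow_lt_one_iff_of_nonneg hB.le hd0, ← Finset.prod_pow]
    simpa [hbd] using hprod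
  rw [hset, volume_preimage_mul_pi b (fun i => (hb i).ne'), abs_of_pos (inv_pos.mpr hB)]
  conv_lhs => rw [← one_mul (volume _)]
  exact (ENNReal.mul_lt_mul_iff_left (volume_sum_pow_le_one_pos hd0).ne'
    (volume_sum_pow_le_one_lt_top hd hd0).ne).mpr
    (ENNReal.one_lt_ofReal.mpr ((one_lt_inv₀ hB).mpr hB1))

lemma one_le_prod_of_volume_le (hd : Even d) (hd0 : d ≠ 0) {c : ι → ℝ} (hc : ∀ i, 0 ≤ c i)
    (hvol : volume {x : ι → ℝ | ∑ i, c i * x i ^ d ≤ 1}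
      ≤ volume {x : ι → ℝ | ∑ i, x i ^ d ≤ 1}) :
    1 ≤ ∏ i, c i := by
  by_contra! hprod
  -- shift the weights to `c + ε > 0`, keeping the product below `1`; this shrinks the set
  have hev : ∀ᶠ ε in nhds (0 : ℝ), ∏ i, (c i + ε) < 1 :=
    Filter.Tendsto.eventually_lt_const (by simpa using hprod)
      ((show Continuous fun ε : ℝ => ∏ i, (c i + ε) by fun_prop).tendsto 0)
  obtain ⟨ε, hε1, hε0⟩ :=
    ((hev.filter_mono nhdsWithin_le_nhds).and (eventually_mem_nhdsWithin (s := Set.Ioi 0))).exists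
  have hsub : {x : ι → ℝ | ∑ i, (c i + ε) * x i ^ d ≤ 1}
      ⊆ {x : ι → ℝ | ∑ i, c i * x i ^ d ≤ 1} := Set.ofPred_subset_ofPred.mpr fun x hx =>
    (Finset.sum_le_sum fun i _ => mul_le_mul_of_nonneg_right (by linarith [hε0.out])
      (hd.pow_nonneg _)).trans hx
  exact (volume_sum_pow_le_one_lt_of_prod_lt_one hd hd0
    (fun i => by linarith [hc i, hε0.out]) hε1).not_ge ((measure_mono hsub).trans hvol)

end SublevelVolume

lemma le_of_lt_of_measure_sublevel_le {X : Type*} [TopologicalSpace X] [MeasurableSpace X]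
    [OpensMeasurableSpace X] (μ : Measure X) [μ.IsOpenPosMeasure] {f h : X → ℝ}
    (hf : Continuous f) (hh : Continuous h) (hfh : ∀ x, f x ≤ h x) {t : ℝ}
    (hμ : μ {x | f x ≤ t} ≤ μ {x | h x ≤ t}) (hfin : μ {x | h x ≤ t} ≠ ⊤) {x : X}
    (hx : f x < t) : h x ≤ t := by
  have hsub : {x | h x ≤ t} ⊆ {x | f x ≤ t} := fun y hy => (hfh y).trans hy
  have hnull : μ ({x | f x ≤ t} \ {x | h x ≤ t}) = 0 := by
    rw [measure_sdiff hsub (isClosed_le hh continuous_const).measurableSet.nullMeasurableSet hfin]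
    exact tsub_eq_zero_of_le hμ
  have hgap : {x | f x < t} ∩ {x | t < h x} ⊆ {x | f x ≤ t} \ {x | h x ≤ t} :=
    fun y ⟨(hfy : f y < t), (hhy : t < h y)⟩ => ⟨hfy.le, hhy.not_ge⟩
  have hempty : {x | f x < t} ∩ {x | t < h x} = ∅ :=
    ((isOpen_lt hf continuous_const).inter (isOpen_lt continuous_const hh)).eq_empty_of_measure_zero
      (measure_mono_null hgap hnull)
  by_contra! hxt
  exact hempty.subset ⟨hx, hxt⟩

lemma le_of_forall_pos_mul_lt_one_imp {a b : ℝ} (h : ∀ s > 0, s * a < 1 → s * b ≤ 1)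
    (hb : 0 < b) : b ≤ a := by
  by_contra! hab
  obtain ⟨r, hr, hrb⟩ := exists_between (max_lt hab hb)
  have hr0 : 0 < r := (le_max_right a 0).trans_lt hr
  have := h r⁻¹ (inv_pos.mpr hr0)
    ((inv_mul_lt_one₀ hr0).mpr ((le_max_left a 0).trans_lt hr))
  exact ((inv_mul_le_one₀ hr0).mp this).not_gt hrb

namespace MvPolynomial

variable {σ : Type*}

/-- The weights `c i` for which AM-GM on each monomial gives `g(x) ≤ ∑ c i * x i ^ d`. -/
noncomputable def l1Weight (g : MvPolynomial σ ℝ) (d : ℕ) (i : σ) : ℝ :=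
  (∑ α ∈ g.support, |coeff α g| * α i) / d

lemma l1Weight_nonneg (g : MvPolynomial σ ℝ) (d : ℕ) (i : σ) : 0 ≤ l1Weight g d i := by
  unfold l1Weight
  positivity

variable [Fintype σ]

lemma sum_abs_coeff_sum_X_pow {d : ℕ} (hd0 : d ≠ 0) :
    ∑ α ∈ (∑ i : σ, (X i : MvPolynomial σ ℝ) ^ d).support,
      |coeff α (∑ i : σ, (X i : MvPolynomial σ ℝ) ^ d)| = Fintype.card σ := by
  classical
  have hcoeff : ∀ α, coeff α (∑ i : σ, (X i : MvPolynomial σ ℝ) ^ d)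
      = ∑ i, if Finsupp.single i d = α then 1 else 0 := by
    simp [coeff_sum, coeff_X_pow]
  have hsupp : (∑ i : σ, (X i : MvPolynomial σ ℝ) ^ d).support
      ⊆ Finset.univ.image (Finsupp.single · d) := fun α hα => by
    obtain ⟨i, -, hi⟩ := Finset.exists_ne_zero_of_sum_ne_zero (hcoeff α ▸ mem_support_iff.mp hα)
    exact Finset.mem_image.mpr ⟨i, Finset.mem_univ i, of_not_not fun h => hi (if_neg h)⟩
  rw [Finset.sum_subset hsupp fun α _ hα => by rw [notMem_support_iff.mp hα, abs_zero],
    Finset.sum_image fun i _ j _ h => Finsupp.single_left_injective hd0 h]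
  simp [hcoeff, Finsupp.single_left_inj hd0]

namespace IsHomogeneous

variable {R : Type*} [CommSemiring R] {φ : MvPolynomial σ R} {n : ℕ}

lemma sum_eq_of_mem_support (hφ : φ.IsHomogeneous n) {α : σ →₀ ℕ} (hα : α ∈ φ.support) :
    ∑ i, α i = n :=
  (Finsupp.degree_eq_sum α).symm.trans (hφ.degree_eq_sum_deg_support hα).symm

lemma eval_smul (hφ : φ.IsHomogeneous n) (r : R) (x : σ → R) :
    eval (r • x) φ = r ^ n * eval x φ := by
  rw [eval_eq', eval_eq', Finset.mul_sum]
  refine Finset.sum_congr rfl fun α hα => ?_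
  simp_rw [Pi.smul_apply, smul_eq_mul, mul_pow, Finset.prod_mul_distrib,
    Finset.prod_pow_eq_pow_sum, hφ.sum_eq_of_mem_support hα]
  ring

end IsHomogeneous

variable {g : MvPolynomial σ ℝ} {d : ℕ}

lemma IsHomogeneous.sum_l1Weight (hg : g.IsHomogeneous d) (hd0 : d ≠ 0) :
    ∑ i, l1Weight g d i = ∑ α ∈ g.support, |coeff α g| := by
  simp only [l1Weight, ← Finset.sum_div]
  rw [Finset.sum_comm, div_eq_iff (Nat.cast_ne_zero.mpr hd0), Finset.sum_mul]
  refine Finset.sum_congr rfl fun α hα => ?_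
  rw [← Finset.mul_sum, ← Nat.cast_sum, hg.sum_eq_of_mem_support hα]

lemma IsHomogeneous.eval_le_sum_l1Weight_mul_pow (hg : g.IsHomogeneous d) (hd : Even d)
    (hd0 : d ≠ 0) (x : σ → ℝ) : eval x g ≤ ∑ i, l1Weight g d i * x i ^ d :=
  calc eval x g = ∑ α ∈ g.support, coeff α g * ∏ i, x i ^ α i := eval_eq' x g
    _ ≤ ∑ α ∈ g.support, |coeff α g| * ∑ i, (α i / d : ℝ) * x i ^ d := by
        refine Finset.sum_le_sum fun α hα => (le_abs_self _).trans ?_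
        rw [abs_mul]
        exact mul_le_mul_of_nonneg_left (abs_prod_pow_le_sum_div_mul_pow hd hd0 α
          (hg.sum_eq_of_mem_support hα) x) (abs_nonneg _)
    _ = ∑ i, l1Weight g d i * x i ^ d := by
        simp only [l1Weight, Finset.mul_sum, Finset.sum_div, Finset.sum_mul]
        exact Finset.sum_comm.trans
          (Finset.sum_congr rfl fun i _ => Finset.sum_congr rfl fun α _ => by ring)

lemma IsHomogeneous.eq_sum_X_pow_of_eval_le (hg : g.IsHomogeneous d) (hd : Even d)
    (hd0 : d ≠ 0) (hle : ∀ x, eval x g ≤ ∑ i, x i ^ d)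
    (hvol : volume {x | eval x g ≤ 1} ≤ volume {x : σ → ℝ | ∑ i, x i ^ d ≤ 1}) :
    g = ∑ i, X i ^ d := by
  have hsub : ∀ x, eval x g < 1 → ∑ i, x i ^ d ≤ 1 := fun x =>
    le_of_lt_of_measure_sublevel_le volume (continuous_eval g) (by fun_prop) hle hvol
      (volume_sum_pow_le_one_lt_top hd hd0).ne
  refine MvPolynomial.funext fun x => ?_
  simp only [map_sum, map_pow, eval_X]
  refine le_antisymm (hle x) ?_
  rcases (Finset.sum_nonneg fun i _ => hd.pow_nonneg (x i)).eq_or_lt with h0 | hpos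
  · have hx : x = 0 := _root_.funext fun i => pow_eq_zero_iff hd0 |>.mp
      ((Finset.sum_eq_zero_iff_of_nonneg fun j _ => hd.pow_nonneg (x j)).mp h0.symm i
        (Finset.mem_univ i))
    have hg0 := hg.eval_smul (0 : ℝ) 0
    simp only [zero_smul, zero_pow hd0, zero_mul] at hg0
    rw [← h0, hx, hg0]
  · refine le_of_forall_pos_mul_lt_one_imp (fun s hs hsg => ?_) hpos
    have hs' : (s ^ (d⁻¹ : ℝ)) ^ d = s := Real.rpow_inv_natCast_pow hs.le hd0
    have hy := hsub (s ^ (d⁻¹ : ℝ) • x) (by rwa [hg.eval_smul, hs'])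
    simpa only [Pi.smul_apply, smul_eq_mul, mul_pow, hs', ← Finset.mul_sum] using hy

end MvPolynomial

theorem l1_unique_minimizer_sum_pow
    (n d : ℕ) (hd : Even d) (hd0 : 0 < d) :
    (volume {x : Fin n → ℝ |
        eval x (∑ i : Fin n, (X i : MvPolynomial (Fin n) ℝ) ^ d) ≤ 1}
      ≤ volume {x : Fin n → ℝ | ∑ i, x i ^ d ≤ 1}) ∧
    (∑ α ∈ (∑ i : Fin n, (X i : MvPolynomial (Fin n) ℝ) ^ d).support,
        |coeff α (∑ i : Fin n, (X i : MvPolynomial (Fin n) ℝ) ^ d)| = (n : ℝ)) ∧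
    ∀ g : MvPolynomial (Fin n) ℝ, g.IsHomogeneous d →
      volume {x : Fin n → ℝ | eval x g ≤ 1} ≤ volume {x : Fin n → ℝ | ∑ i, x i ^ d ≤ 1} →
      g ≠ ∑ i : Fin n, (X i : MvPolynomial (Fin n) ℝ) ^ d →
      (n : ℝ) < ∑ α ∈ g.support, |coeff α g| := by
  refine ⟨by simp, by simpa using sum_abs_coeff_sum_X_pow (σ := Fin n) hd0.ne',
    fun g hg hvol hne => ?_⟩
  by_contra! hnorm
  have hdom := hg.eval_le_sum_l1Weight_mul_pow hd hd0.ne'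
  have hprod : 1 ≤ ∏ i, l1Weight g d i := one_le_prod_of_volume_le hd hd0.ne'
    (l1Weight_nonneg g d) ((measure_mono fun x hx => (hdom x).trans hx).trans hvol)
  have hc : ∀ i, l1Weight g d i = 1 := eq_one_of_one_le_prod_of_sum_le_card
    (l1Weight_nonneg g d) hprod (by simpa [hg.sum_l1Weight hd0.ne'] using hnorm)
  exact hne (hg.eq_sum_X_pow_of_eval_le hd hd0.ne' (fun x => by simpa [hc] using hdom x) hvol)
end

section
/- Among all homogeneous polynomials g of even degree d in n variables with ℓ1-norm of coefficients equal to n, the polynomial g*(x) = Σ_i x_i^d uniquely minimizes the Lebesgue volume of the sublevel set {x : g(x) ≤ 1}. -/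
/-!
Applying weighted AM-GM to each monomial gives `g x ≤ ∑ i, c i * x i ^ d` with `c i ≥ 0` and
`∑ i, c i = ‖g‖₁ ≤ n`, so the sublevel set of `g` contains that of the diagonal form
`∑ i, c i * x i ^ d`. A diagonal change of variables shows that the latter has
`(∏ i, c i) ^ (-1 / d)` times the volume of the unit `ℓ^d` ball, and `∏ i, c i < 1` unless `c = 1`
(zero coefficients are handled by passing to `c + ε`). If `c = 1`, then `g ≤ g*` pointwise and
`g ≠ g*`; by homogeneity some ray meets the nonempty open set `{g < 1} \ {g* ≤ 1}`.
-/

open MeasureTheory MvPolynomial Finset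

namespace MvPolynomial.IsHomogeneous

variable {ι R : Type*} [CommSemiring R] {d : ℕ} {g : MvPolynomial ι R}

lemma sum_apply_eq [Fintype ι] (hg : g.IsHomogeneous d) {α : ι →₀ ℕ} (hα : α ∈ g.support) :
    ∑ i, α i = d := by
  rw [← Finsupp.degree_eq_sum, Finsupp.degree_eq_weight_one]
  exact hg (mem_support_iff.mp hα)

lemma eval_smul_s11 [Fintype ι] (hg : g.IsHomogeneous d) (r : R) (x : ι → R) :
    eval (r • x) g = r ^ d * eval x g := by
  rw [eval_eq', eval_eq', Finset.mul_sum]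
  refine Finset.sum_congr rfl fun α hα => ?_
  simp only [Pi.smul_apply, smul_eq_mul, mul_pow, Finset.prod_mul_distrib,
    Finset.prod_pow_eq_pow_sum, hg.sum_apply_eq hα]
  ring

end MvPolynomial.IsHomogeneous

section AMGM

variable {ι : Type*} {d : ℕ}

/-- Weighted AM-GM with weights `α i / d` bounds each monomial `x ^ α` of `g` by
`∑ i, (α i / d) * x i ^ d`; these are the resulting coefficients of `x i ^ d`. -/
noncomputable def diagMajorantCoeff (g : MvPolynomial ι ℝ) (d : ℕ) (i : ι) : ℝ :=
  ∑ α ∈ g.support, |coeff α g| * (α i / d)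

lemma diagMajorantCoeff_nonneg (g : MvPolynomial ι ℝ) (d : ℕ) (i : ι) :
    0 ≤ diagMajorantCoeff g d i :=
  Finset.sum_nonneg fun _ _ => by positivity

variable [Fintype ι]

lemma prod_abs_pow_le_sum_mul_abs_pow (hd : 0 < d) (x : ι → ℝ) {α : ι → ℕ}
    (hα : ∑ i, α i = d) : ∏ i, |x i| ^ α i ≤ ∑ i, (α i / d : ℝ) * |x i| ^ d := by
  have hd' : (d : ℝ) ≠ 0 := Nat.cast_ne_zero.mpr hd.ne'
  calc ∏ i, |x i| ^ α i = ∏ i, (|x i| ^ d) ^ (α i / d : ℝ) := by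
        refine Finset.prod_congr rfl fun i _ => ?_
        rw [← Real.rpow_natCast |x i| d, ← Real.rpow_mul (abs_nonneg _), mul_div_cancel₀ _ hd',
          Real.rpow_natCast]
    _ ≤ ∑ i, (α i / d : ℝ) * |x i| ^ d :=
        Real.geom_mean_le_arith_mean_weighted _ _ _ (fun i _ => by positivity)
          (by rw [← Finset.sum_div, div_eq_one_iff_eq hd']; exact_mod_cast hα)
          (fun i _ => by positivity)

lemma sum_diagMajorantCoeff (hd : 0 < d) {g : MvPolynomial ι ℝ} (hg : g.IsHomogeneous d) :
    ∑ i, diagMajorantCoeff g d i = ∑ α ∈ g.support, |coeff α g| := by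
  have hd' : (d : ℝ) ≠ 0 := Nat.cast_ne_zero.mpr hd.ne'
  unfold diagMajorantCoeff
  rw [Finset.sum_comm]
  refine Finset.sum_congr rfl fun α hα => ?_
  rw [← Finset.mul_sum, ← Finset.sum_div, ← Nat.cast_sum, hg.sum_apply_eq hα, div_self hd', mul_one]

lemma eval_le_sum_diagMajorantCoeff_mul_pow (hd : Even d) (hd0 : 0 < d)
    {g : MvPolynomial ι ℝ} (hg : g.IsHomogeneous d) (x : ι → ℝ) :
    eval x g ≤ ∑ i, diagMajorantCoeff g d i * x i ^ d := by
  have hmono : ∀ α ∈ g.support,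
      coeff α g * ∏ i, x i ^ α i ≤ |coeff α g| * ∑ i, (α i / d : ℝ) * x i ^ d := by
    intro α hα
    calc coeff α g * ∏ i, x i ^ α i ≤ |coeff α g * ∏ i, x i ^ α i| := le_abs_self _
      _ = |coeff α g| * ∏ i, |x i| ^ α i := by simp only [abs_mul, Finset.abs_prod, abs_pow]
      _ ≤ |coeff α g| * ∑ i, (α i / d : ℝ) * x i ^ d := by
          simp only [← hd.pow_abs (x _)]
          gcongr
          exact prod_abs_pow_le_sum_mul_abs_pow hd0 x (hg.sum_apply_eq hα)
  calc eval x g ≤ ∑ α ∈ g.support, |coeff α g| * ∑ i, (α i / d : ℝ) * x i ^ d := by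
        rw [eval_eq']; exact Finset.sum_le_sum hmono
    _ = ∑ i, diagMajorantCoeff g d i * x i ^ d := by
        simp only [diagMajorantCoeff, Finset.mul_sum, Finset.sum_mul, mul_assoc]
        exact Finset.sum_comm

end AMGM

lemma measure_lt_of_subset_of_isOpen_subset_sdiff {α : Type*} [TopologicalSpace α]
    [MeasurableSpace α] {μ : Measure α} [μ.IsOpenPosMeasure] {s t u : Set α} (hst : s ⊆ t)
    (hs : NullMeasurableSet s μ) (hs_fin : μ s ≠ ⊤) (hu : IsOpen u) (hu_ne : u.Nonempty)
    (hut : u ⊆ t \ s) : μ s < μ t := by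
  rw [← tsub_pos_iff_lt, ← measure_sdiff hst hs hs_fin]
  exact (hu.measure_pos μ hu_ne).trans_le (measure_mono hut)

lemma prod_lt_one_of_sum_le_card {ι : Type*} [Fintype ι] {c : ι → ℝ} (hc : ∀ i, 0 ≤ c i)
    (hsum : ∑ i, c i ≤ Fintype.card ι) (hne : c ≠ 1) : ∏ i, c i < 1 := by
  by_cases hzero : ∃ i, c i = 0
  · obtain ⟨i, hi⟩ := hzero
    rw [Finset.prod_eq_zero (Finset.mem_univ i) hi]
    exact one_pos
  push Not at hzero
  have hpos : ∀ i, 0 < c i := fun i => (hc i).lt_of_ne' (hzero i)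
  obtain ⟨j, hj⟩ := Function.ne_iff.mp hne
  rw [← Real.log_neg_iff (Finset.prod_pos fun i _ => hpos i),
    Real.log_prod fun i _ => (hpos i).ne']
  calc ∑ i, Real.log (c i) < ∑ i, (c i - 1) :=
        Finset.sum_lt_sum (fun i _ => Real.log_le_sub_one_of_pos (hpos i))
          ⟨j, Finset.mem_univ j, Real.log_lt_sub_one_of_pos (hpos j) hj⟩
    _ ≤ 0 := by simpa [Finset.sum_sub_distrib] using hsum

lemma exists_pos_prod_add_lt_one {ι : Type*} [Fintype ι] {c : ι → ℝ} (h : ∏ i, c i < 1) :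
    ∃ ε > 0, ∏ i, (c i + ε) < 1 := by
  have hcont : Continuous fun ε : ℝ => ∏ i, (c i + ε) := by fun_prop
  have hev : ∀ᶠ ε in nhdsWithin (0 : ℝ) (Set.Ioi 0), ∏ i, (c i + ε) < 1 :=
    tendsto_nhdsWithin_of_tendsto_nhds (hcont.tendsto' 0 _ (by simp)) |>.eventually
      (gt_mem_nhds h)
  exact (hev.and self_mem_nhdsWithin).exists.imp fun ε h => ⟨h.2, h.1⟩

section PowSum

variable {ι : Type*} [Fintype ι] {d : ℕ}

lemma volume_powSum_le_one_lt_top (hd : Even d) (hd0 : 0 < d) :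
    volume {x : ι → ℝ | ∑ i, x i ^ d ≤ 1} < ⊤ := by
  refine (measure_mono (Set.ofPred_subset.mpr fun x hx => ?_)).trans_lt
    (measure_closedBall_lt_top (x := 0) (r := 1))
  rw [mem_closedBall_zero_iff, pi_norm_le_iff_of_nonneg zero_le_one]
  intro i
  have hxi : |x i| ^ d ≤ 1 := by
    rw [hd.pow_abs]
    exact (Finset.single_le_sum (fun j _ => hd.pow_nonneg (x j)) (Finset.mem_univ i)).trans hx
  exact (pow_le_one_iff_of_nonneg (abs_nonneg _) hd0.ne').mp hxi

lemma volume_powSum_le_one_pos (hd : 0 < d) :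
    0 < volume {x : ι → ℝ | ∑ i, x i ^ d ≤ 1} := by
  have hopen : IsOpen {x : ι → ℝ | ∑ i, x i ^ d < 1} := isOpen_lt (by fun_prop) continuous_const
  refine (hopen.measure_pos volume ⟨0, by simp [zero_pow hd.ne']⟩).trans_le
    (measure_mono (Set.ofPred_subset_ofPred.mpr fun _ => le_of_lt))

lemma volume_sum_mul_pow_le_one (hd : 0 < d) {c : ι → ℝ} (hc : ∀ i, 0 < c i) :
    volume {x : ι → ℝ | ∑ i, c i * x i ^ d ≤ 1}
      = ENNReal.ofReal ((∏ i, c i) ^ (-(d : ℝ)⁻¹)) * volume {x : ι → ℝ | ∑ i, x i ^ d ≤ 1} := by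
  classical
  set b : ι → ℝ := fun i => c i ^ (d : ℝ)⁻¹
  have hdet : LinearMap.det (Matrix.toLin' (Matrix.diagonal b)) = (∏ i, c i) ^ (d : ℝ)⁻¹ := by
    rw [LinearMap.det_toLin', Matrix.det_diagonal,
      Real.finsetProd_rpow _ _ fun i _ => (hc i).le]
  have hprod : 0 < ∏ i, c i := Finset.prod_pos fun i _ => hc i
  have hset : {x : ι → ℝ | ∑ i, c i * x i ^ d ≤ 1}
      = Matrix.toLin' (Matrix.diagonal b) ⁻¹' {x | ∑ i, x i ^ d ≤ 1} := by
    ext x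
    simp [Matrix.mulVec_diagonal, b, mul_pow, Real.rpow_inv_natCast_pow (hc _).le hd.ne']
  rw [hset, Measure.addHaar_preimage_linearMap _ (by rw [hdet]; positivity), hdet,
    Real.rpow_neg hprod.le, abs_of_pos (by positivity)]

lemma volume_powSum_le_one_lt_volume_sum_mul_pow_le_one (hd : Even d) (hd0 : 0 < d)
    {c : ι → ℝ} (hc : ∀ i, 0 ≤ c i) (hsum : ∑ i, c i ≤ Fintype.card ι) (hne : c ≠ 1) :
    volume {x : ι → ℝ | ∑ i, x i ^ d ≤ 1} < volume {x : ι → ℝ | ∑ i, c i * x i ^ d ≤ 1} := by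
  obtain ⟨ε, hε, hprod⟩ := exists_pos_prod_add_lt_one (prod_lt_one_of_sum_le_card hc hsum hne)
  have hcε : ∀ i, 0 < c i + ε := fun i => by linarith [hc i]
  have hscale : 1 < ENNReal.ofReal ((∏ i, (c i + ε)) ^ (-(d : ℝ)⁻¹)) := by
    rw [← ENNReal.ofReal_one, ENNReal.ofReal_lt_ofReal_iff_of_nonneg zero_le_one]
    exact Real.one_lt_rpow_of_pos_of_lt_one_of_neg (Finset.prod_pos fun i _ => hcε i) hprod
      (by simp [hd0])
  calc volume {x : ι → ℝ | ∑ i, x i ^ d ≤ 1}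
      < ENNReal.ofReal ((∏ i, (c i + ε)) ^ (-(d : ℝ)⁻¹)) *
          volume {x : ι → ℝ | ∑ i, x i ^ d ≤ 1} := by
        simpa using ENNReal.mul_lt_mul_left (volume_powSum_le_one_pos (ι := ι) hd0).ne'
          (volume_powSum_le_one_lt_top hd hd0).ne hscale
    _ = volume {x : ι → ℝ | ∑ i, (c i + ε) * x i ^ d ≤ 1} :=
        (volume_sum_mul_pow_le_one hd0 hcε).symm
    _ ≤ volume {x : ι → ℝ | ∑ i, c i * x i ^ d ≤ 1} := by
        refine measure_mono (Set.ofPred_subset_ofPred.mpr fun x hx => le_trans ?_ hx)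
        gcongr with i
        · exact hd.pow_nonneg _
        · linarith

end PowSum

section EqualityCase

variable {ι : Type*} [Fintype ι] {d : ℕ}

lemma exists_eval_lt_one_lt_eval (hd : 0 < d) {f q : MvPolynomial ι ℝ} (hf : f.IsHomogeneous d)
    (hq : q.IsHomogeneous d) {x : ι → ℝ} (hlt : eval x f < eval x q) (hpos : 0 < eval x q) :
    ∃ y, eval y f < 1 ∧ 1 < eval y q := by
  -- Scaling `x` by `t ^ (-1 / d)` divides both values by `t`.
  set t := (max (eval x f) 0 + eval x q) / 2
  have hft : max (eval x f) 0 < t := by grind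
  have hqt : t < eval x q := by grind
  have ht : 0 < t := (le_max_right _ _).trans_lt hft
  refine ⟨t⁻¹ ^ (d : ℝ)⁻¹ • x, ?_, ?_⟩
  · rw [hf.eval_smul_s11, Real.rpow_inv_natCast_pow (by positivity) hd.ne', inv_mul_lt_one₀ ht]
    exact (le_max_left _ _).trans_lt hft
  · rw [hq.eval_smul_s11, Real.rpow_inv_natCast_pow (by positivity) hd.ne', one_lt_inv_mul₀ ht]
    exact hqt

lemma volume_powSum_le_one_lt_of_eval_le_of_ne (hd : Even d) (hd0 : 0 < d)
    {g : MvPolynomial ι ℝ} (hg : g.IsHomogeneous d) (hle : ∀ x, eval x g ≤ ∑ i, x i ^ d)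
    (hne : g ≠ ∑ i, X i ^ d) :
    volume {x : ι → ℝ | ∑ i, x i ^ d ≤ 1} < volume {x : ι → ℝ | eval x g ≤ 1} := by
  set q : MvPolynomial ι ℝ := ∑ i, X i ^ d
  have hq : q.IsHomogeneous d := IsHomogeneous.sum _ _ _ fun i _ => isHomogeneous_X_pow i d
  have heval_q : ∀ x, eval x q = ∑ i, x i ^ d := by simp [q]
  obtain ⟨x₀, hx₀⟩ : ∃ x, eval x g ≠ eval x q := by
    by_contra! h
    exact hne (MvPolynomial.funext h)
  have hlt : eval x₀ g < eval x₀ q := ((hle x₀).trans_eq (heval_q x₀).symm).lt_of_ne hx₀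
  have hpos : 0 < eval x₀ q := by
    rw [heval_q]
    refine (Finset.sum_nonneg fun i _ => hd.pow_nonneg (x₀ i)).lt_of_ne fun h => hx₀ ?_
    -- `q` vanishes only at `0`, where the homogeneous `g` vanishes too.
    have hx₀_zero : x₀ = 0 := funext fun i => (pow_eq_zero_iff hd0.ne').mp <|
      (Finset.sum_eq_zero_iff_of_nonneg fun j _ => hd.pow_nonneg (x₀ j)).mp h.symm i
        (Finset.mem_univ i)
    subst hx₀_zero
    rw [heval_q, ← h]
    simpa [zero_pow hd0.ne'] using hg.eval_smul_s11 0 0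
  obtain ⟨y, hgy, hqy⟩ := exists_eval_lt_one_lt_eval hd0 hg hq hlt hpos
  have hclosed : IsClosed {x : ι → ℝ | ∑ i, x i ^ d ≤ 1} :=
    isClosed_le (by fun_prop) continuous_const
  refine measure_lt_of_subset_of_isOpen_subset_sdiff
    (u := {x | eval x g < 1} ∩ {x | 1 < eval x q})
    (Set.ofPred_subset_ofPred.mpr fun x hx => (hle x).trans hx)
    hclosed.measurableSet.nullMeasurableSet
    (volume_powSum_le_one_lt_top hd hd0).ne
    ((isOpen_lt (continuous_eval g) continuous_const).inter
      (isOpen_lt continuous_const (continuous_eval q)))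
    ⟨y, hgy, hqy⟩ fun x hx => ?_
  simp only [Set.mem_inter_iff, Set.mem_sdiff, Set.mem_ofPred_eq, heval_q] at hx ⊢
  exact ⟨hx.1.le, hx.2.not_ge⟩

end EqualityCase

theorem min_volume_among_l1_ball
    (n d : ℕ) (hd : Even d) (hd0 : 0 < d)
    (g : MvPolynomial (Fin n) ℝ) (hg : g.IsHomogeneous d)
    (hl1 : ∑ α ∈ g.support, |coeff α g| ≤ (n : ℝ))
    (hne : g ≠ ∑ i : Fin n, (X i : MvPolynomial (Fin n) ℝ) ^ d) :
    volume {x : Fin n → ℝ | ∑ i, x i ^ d ≤ 1}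
      < volume {x : Fin n → ℝ | eval x g ≤ 1} := by
  set c := diagMajorantCoeff g d
  have hmajorant : ∀ x, eval x g ≤ ∑ i, c i * x i ^ d :=
    eval_le_sum_diagMajorantCoeff_mul_pow hd hd0 hg
  by_cases hc : c = 1
  · refine volume_powSum_le_one_lt_of_eval_le_of_ne hd hd0 hg (fun x => ?_) hne
    simpa [hc] using hmajorant x
  · have hsum : ∑ i, c i ≤ Fintype.card (Fin n) := by
      rw [sum_diagMajorantCoeff hd0 hg, Fintype.card_fin]
      exact hl1
    calc volume {x : Fin n → ℝ | ∑ i, x i ^ d ≤ 1}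
        < volume {x : Fin n → ℝ | ∑ i, c i * x i ^ d ≤ 1} :=
          volume_powSum_le_one_lt_volume_sum_mul_pow_le_one hd hd0
            (diagMajorantCoeff_nonneg g d) hsum hc
      _ ≤ volume {x : Fin n → ℝ | eval x g ≤ 1} :=
          measure_mono (Set.ofPred_subset_ofPred.mpr fun x hx => (hmajorant x).trans hx)
end

section
/- The function g ↦ vol({x : g(x) ≤ 1}), defined on the convex cone of homogeneous polynomials of even degree d whose unit sublevel set has finite volume, is strictly convex. -/
/-!
For a function `φ` that is positively homogeneous of degree `d` on an `n`-dimensional space, the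
sublevel sets scale as `μ {φ ≤ r} = r ^ (n / d) * μ {φ ≤ 1}`, so the layer-cake formula gives
`∫ exp (-φ) = Γ (n / d + 1) * μ {φ ≤ 1}`. The volume of the unit sublevel set is therefore a
fixed positive multiple of `φ ↦ ∫ exp (-φ)`, which is strictly convex in `φ` because `exp` is
strictly convex and two distinct polynomials differ on a set of positive measure.
-/

open MeasureTheory Module Set
open scoped Pointwise

namespace MvPolynomial

variable {σ R : Type*} [CommSemiring R] {g : MvPolynomial σ R} {d : ℕ}

theorem IsHomogeneous.eval_smul_s13 (hg : g.IsHomogeneous d) (c : R) (x : σ → R) :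
    eval (c • x) g = c ^ d * eval x g := by
  simp only [eval_eq, Finset.mul_sum, Pi.smul_apply, smul_eq_mul, mul_pow,
    Finset.prod_mul_distrib, Finset.prod_pow_eq_pow_sum]
  refine Finset.sum_congr rfl fun m hm => ?_
  have hdeg : ∑ i ∈ m.support, m i = d := by
    rw [← Finsupp.degree_apply, Finsupp.degree_eq_weight_one]
    exact hg (mem_support_iff.mp hm)
  rw [hdeg]
  ring

theorem IsHomogeneous.eval_zero (hg : g.IsHomogeneous d) (hd : d ≠ 0) : eval 0 g = 0 := by
  rw [MvPolynomial.eval_zero, constantCoeff_eq]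
  exact hg.coeff_eq_zero (by simpa using hd.symm)

theorem frequently_eval_ne {σ : Type*} (μ : Measure (σ → ℝ)) [μ.IsOpenPosMeasure]
    {p q : MvPolynomial σ ℝ} (hpq : p ≠ q) : ∃ᵐ x ∂μ, eval x p ≠ eval x q := by
  intro hae
  have hfun := (Continuous.ae_eq_iff_eq μ (continuous_eval p) (continuous_eval q)).mp
    (hae.mono fun x hx => not_not.mp hx)
  exact hpq (MvPolynomial.funext (congrFun hfun))

end MvPolynomial

theorem Real.lintegral_Ioo_neg_log_rpow {a : ℝ} (ha : -1 < a) :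
    ∫⁻ s in Ioo 0 1, ENNReal.ofReal ((-Real.log s) ^ a) = ENNReal.ofReal (Real.Gamma (a + 1)) := by
  have himg : (fun u => Real.exp (-u)) '' Ioi 0 = Ioo 0 1 := by
    ext s
    constructor
    · rintro ⟨u, hu, rfl⟩
      exact ⟨Real.exp_pos _, Real.exp_lt_one_iff.mpr (neg_lt_zero.mpr hu)⟩
    · rintro ⟨hs0, hs1⟩
      exact ⟨-Real.log s, neg_pos.mpr (Real.log_neg hs0 hs1), by simp [Real.exp_log hs0]⟩
  have hderiv : ∀ u ∈ Ioi (0 : ℝ),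
      HasDerivWithinAt (fun u => Real.exp (-u)) (-Real.exp (-u)) (Ioi 0) u := fun u _ => by
    simpa using ((hasDerivAt_neg u).exp).hasDerivWithinAt
  have hinj : InjOn (fun u : ℝ => Real.exp (-u)) (Ioi 0) :=
    (Real.exp_injective.comp neg_injective).injOn
  have hGamma := Real.GammaIntegral_convergent (show 0 < a + 1 by linarith)
  rw [add_sub_cancel_right] at hGamma
  rw [← himg, lintegral_image_eq_lintegral_abs_deriv_mul measurableSet_Ioi hderiv hinj,
    Real.Gamma_eq_integral (by linarith), add_sub_cancel_right,
    ofReal_integral_eq_lintegral_ofReal hGamma ((ae_restrict_mem measurableSet_Ioi).mono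
      fun u (hu : 0 < u) => mul_nonneg (Real.exp_pos _).le (Real.rpow_nonneg hu.le a))]
  refine lintegral_congr fun u => ?_
  rw [abs_neg, abs_of_pos (Real.exp_pos _), Real.log_exp, neg_neg,
    ← ENNReal.ofReal_mul (Real.exp_pos _).le]

def IsPosHomogeneous {E : Type*} [SMul ℝ E] (d : ℕ) (φ : E → ℝ) : Prop :=
  ∀ c : ℝ, 0 < c → ∀ x, φ (c • x) = c ^ d * φ x

theorem MvPolynomial.IsHomogeneous.isPosHomogeneous_eval {σ : Type*} {g : MvPolynomial σ ℝ}
    {d : ℕ} (hg : g.IsHomogeneous d) : IsPosHomogeneous d fun x => eval x g :=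
  fun c _ x => hg.eval_smul_s13 c x

namespace IsPosHomogeneous

theorem smul_setOf_le {E : Type*} [AddCommGroup E] [Module ℝ E] {φ : E → ℝ} {d : ℕ}
    (hφ : IsPosHomogeneous d φ) {c : ℝ} (hc : 0 < c) (s : ℝ) :
    c • {x | φ x ≤ s} = {x | φ x ≤ c ^ d * s} := by
  ext x
  rw [mem_smul_set_iff_inv_smul_mem₀ hc.ne', mem_ofPred_eq, mem_ofPred_eq,
    hφ _ (inv_pos.mpr hc), inv_pow, inv_mul_le_iff₀ (pow_pos hc d)]

variable {E : Type*} [NormedAddCommGroup E] [NormedSpace ℝ E] [FiniteDimensional ℝ E]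
  [MeasurableSpace E] [BorelSpace E] (μ : Measure E) [μ.IsAddHaarMeasure]
  {φ : E → ℝ} {d : ℕ}

theorem addHaar_setOf_le_pow_mul (hφ : IsPosHomogeneous d φ) {c : ℝ} (hc : 0 < c) (s : ℝ) :
    μ {x | φ x ≤ c ^ d * s} = ENNReal.ofReal (c ^ finrank ℝ E) * μ {x | φ x ≤ s} := by
  rw [← hφ.smul_setOf_le hc, Measure.addHaar_smul_of_nonneg μ hc.le]

theorem addHaar_setOf_le_eq_rpow_mul (hφ : IsPosHomogeneous d φ) (hd : d ≠ 0) {s : ℝ}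
    (hs : 0 < s) :
    μ {x | φ x ≤ s} = ENNReal.ofReal (s ^ (finrank ℝ E / d : ℝ)) * μ {x | φ x ≤ 1} := by
  have hroot : (s ^ (d⁻¹ : ℝ)) ^ d = s := Real.rpow_inv_natCast_pow hs.le hd
  have hpow : (s ^ (d⁻¹ : ℝ)) ^ finrank ℝ E = s ^ (finrank ℝ E / d : ℝ) := by
    rw [← Real.rpow_natCast, ← Real.rpow_mul hs.le, inv_mul_eq_div]
  conv_lhs => rw [← mul_one s, ← hroot]
  rw [hφ.addHaar_setOf_le_pow_mul μ (by positivity), hpow]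

/-- `{φ ≤ 0}` is a cone, so `μ {φ ≤ 0} = 2 ^ finrank ℝ E * μ {φ ≤ 0}`. -/
theorem addHaar_setOf_nonpos_eq_zero [Nontrivial E] (hφ : IsPosHomogeneous d φ)
    (hfin : μ {x | φ x ≤ 1} ≠ ⊤) : μ {x | φ x ≤ 0} = 0 := by
  have hcone := hφ.addHaar_setOf_le_pow_mul μ two_pos 0
  rw [mul_zero] at hcone
  have hlt : μ {x | φ x ≤ 0} ≠ ⊤ :=
    ne_top_of_le_ne_top hfin (measure_mono fun x (hx : φ x ≤ 0) => hx.trans zero_le_one)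
  have h2 : (1 : ENNReal) < ENNReal.ofReal (2 ^ finrank ℝ E) := by
    rw [← ENNReal.ofReal_one, ENNReal.ofReal_lt_ofReal_iff (by positivity)]
    exact one_lt_pow₀ one_lt_two finrank_pos.ne'
  by_contra h0
  have hgrow := ENNReal.mul_lt_mul_left h0 hlt h2
  rw [one_mul, ← hcone] at hgrow
  exact hgrow.false

/-- Layer cake: `∫ exp (-φ) = ∫₀^∞ μ {s ≤ exp (-φ)} ds`, where the levels `s ≥ 1` lie in the
null cone `{φ ≤ 0}` and the levels `s < 1` are rescaled copies of `{φ ≤ 1}`. -/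
theorem lintegral_exp_neg_eq_gamma_mul [Nontrivial E] (hφ : IsPosHomogeneous d φ)
    (hφm : Measurable φ) (hd : d ≠ 0) (hfin : μ {x | φ x ≤ 1} ≠ ⊤) :
    ∫⁻ x, ENNReal.ofReal (Real.exp (-φ x)) ∂μ
      = ENNReal.ofReal (Real.Gamma (finrank ℝ E / d + 1)) * μ {x | φ x ≤ 1} := by
  have hlevel (s : ℝ) (hs : 0 < s) :
      {x | s ≤ Real.exp (-φ x)} = {x | φ x ≤ -Real.log s} := by
    ext x
    rw [mem_ofPred_eq, mem_ofPred_eq, ← Real.log_le_iff_le_exp hs, le_neg]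
  have hsmall : ∀ s ∈ Ioo (0 : ℝ) 1, μ {x | s ≤ Real.exp (-φ x)}
      = ENNReal.ofReal ((-Real.log s) ^ (finrank ℝ E / d : ℝ)) * μ {x | φ x ≤ 1} :=
    fun s hs => by
      rw [hlevel s hs.1, hφ.addHaar_setOf_le_eq_rpow_mul μ hd
        (neg_pos.mpr (Real.log_neg hs.1 hs.2))]
  have hlarge : ∀ s ∈ Ici (1 : ℝ), μ {x | s ≤ Real.exp (-φ x)} = 0 := fun s hs => by
    refine measure_mono_null (fun x hx => ?_) (hφ.addHaar_setOf_nonpos_eq_zero μ hfin)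
    rw [hlevel s (zero_lt_one.trans_le hs)] at hx
    exact hx.trans (neg_nonpos.mpr (Real.log_nonneg hs))
  rw [lintegral_eq_lintegral_meas_le μ (ae_of_all _ fun x => (Real.exp_pos _).le)
      (hφm.neg.exp (f := fun x => -φ x)).aemeasurable, ← Ioo_union_Ici_eq_Ioi zero_lt_one,
    lintegral_union measurableSet_Ici ((Iio_disjoint_Ici le_rfl).mono_left Ioo_subset_Iio_self),
    setLIntegral_congr_fun measurableSet_Ioo hsmall,
    setLIntegral_congr_fun measurableSet_Ici hlarge, lintegral_zero, add_zero,
    lintegral_mul_const' _ _ hfin,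
    Real.lintegral_Ioo_neg_log_rpow (neg_one_lt_zero.trans_le (by positivity))]

end IsPosHomogeneous

theorem setOf_convexComb_le_subset_union {α : Type*} {u v : α → ℝ} {t : ℝ} (ht0 : 0 ≤ t)
    (ht1 : t ≤ 1) (s : ℝ) :
    {x | t * u x + (1 - t) * v x ≤ s} ⊆ {x | u x ≤ s} ∪ {x | v x ≤ s} := by
  intro x (hx : t * u x + (1 - t) * v x ≤ s)
  by_contra hcon
  simp only [mem_union, mem_ofPred_eq, not_or, not_le] at hcon
  have hu := mul_le_mul_of_nonneg_left (min_le_left (u x) (v x)) ht0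
  have hv := mul_le_mul_of_nonneg_left (min_le_right (u x) (v x)) (sub_nonneg.2 ht1)
  linarith [lt_min hcon.1 hcon.2]

theorem lintegral_exp_neg_convexComb_lt {α : Type*} [MeasurableSpace α] {μ : Measure α}
    {u v : α → ℝ} (hu : Measurable u) (hv : Measurable v) (huv : ∃ᵐ x ∂μ, u x ≠ v x)
    (hu_fin : ∫⁻ x, ENNReal.ofReal (Real.exp (-u x)) ∂μ ≠ ⊤)
    (hv_fin : ∫⁻ x, ENNReal.ofReal (Real.exp (-v x)) ∂μ ≠ ⊤) {t : ℝ} (ht0 : 0 < t)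
    (ht1 : t < 1) :
    ∫⁻ x, ENNReal.ofReal (Real.exp (-(t * u x + (1 - t) * v x))) ∂μ
      < ENNReal.ofReal t * ∫⁻ x, ENNReal.ofReal (Real.exp (-u x)) ∂μ
        + ENNReal.ofReal (1 - t) * ∫⁻ x, ENNReal.ofReal (Real.exp (-v x)) ∂μ := by
  have hcomb (a b : ℝ) : -(t * a + (1 - t) * b) = t • -a + (1 - t) • -b := by
    simp only [smul_eq_mul]; ring
  have hle (x : α) : Real.exp (-(t * u x + (1 - t) * v x))
      ≤ t * Real.exp (-u x) + (1 - t) * Real.exp (-v x) := by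
    rw [hcomb]
    exact convexOn_exp.2 (mem_univ _) (mem_univ _) ht0.le (sub_pos.2 ht1).le (by ring)
  have hlt (x : α) (hx : u x ≠ v x) : Real.exp (-(t * u x + (1 - t) * v x))
      < t * Real.exp (-u x) + (1 - t) * Real.exp (-v x) := by
    rw [hcomb]
    exact strictConvexOn_exp.2 (mem_univ _) (mem_univ _) (neg_injective.ne hx) ht0
      (sub_pos.2 ht1) (by ring)
  have hmu : Measurable fun x => ENNReal.ofReal (Real.exp (-u x)) := hu.neg.exp.ennreal_ofReal
  have hmv : Measurable fun x => ENNReal.ofReal (Real.exp (-v x)) := hv.neg.exp.ennreal_ofReal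
  have hsplit (x : α) : ENNReal.ofReal (t * Real.exp (-u x) + (1 - t) * Real.exp (-v x))
      = ENNReal.ofReal t * ENNReal.ofReal (Real.exp (-u x))
        + ENNReal.ofReal (1 - t) * ENNReal.ofReal (Real.exp (-v x)) := by
    rw [ENNReal.ofReal_add (by positivity) (mul_nonneg (sub_pos.2 ht1).le (Real.exp_pos _).le),
      ENNReal.ofReal_mul ht0.le, ENNReal.ofReal_mul (sub_pos.2 ht1).le]
  have hrhs : ∫⁻ x, ENNReal.ofReal (t * Real.exp (-u x) + (1 - t) * Real.exp (-v x)) ∂μ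
      = ENNReal.ofReal t * ∫⁻ x, ENNReal.ofReal (Real.exp (-u x)) ∂μ
        + ENNReal.ofReal (1 - t) * ∫⁻ x, ENNReal.ofReal (Real.exp (-v x)) ∂μ := by
    simp_rw [hsplit]
    rw [lintegral_add_left (hmu.const_mul _), lintegral_const_mul _ hmu,
      lintegral_const_mul _ hmv]
  have hrhs_fin : ENNReal.ofReal t * ∫⁻ x, ENNReal.ofReal (Real.exp (-u x)) ∂μ
      + ENNReal.ofReal (1 - t) * ∫⁻ x, ENNReal.ofReal (Real.exp (-v x)) ∂μ ≠ ⊤ := by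
    finiteness
  rw [← hrhs] at hrhs_fin ⊢
  refine lintegral_strict_mono_of_ae_le_of_frequently_ae_lt (by fun_prop)
    (ne_top_of_le_ne_top hrhs_fin (lintegral_mono fun x => ENNReal.ofReal_le_ofReal (hle x)))
    (ae_of_all _ fun x => ENNReal.ofReal_le_ofReal (hle x)) (huv.mono fun x hx => ?_)
  exact ((ENNReal.ofReal_lt_ofReal_iff (by positivity)).mpr (hlt x hx)).ne

open MvPolynomial

theorem volume_sublevel_strictly_convex_general
    (n d : ℕ) (hd0 : 2 ≤ d)
    (g h : MvPolynomial (Fin n) ℝ)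
    (hg : g.IsHomogeneous d) (hh : h.IsHomogeneous d)
    (hgv : volume {x : Fin n → ℝ | eval x g ≤ 1} ≠ ⊤)
    (hhv : volume {x : Fin n → ℝ | eval x h ≤ 1} ≠ ⊤)
    (hne : g ≠ h) (t : ℝ) (ht0 : 0 < t) (ht1 : t < 1) :
    volume {x : Fin n → ℝ | eval x (t • g + (1 - t) • h) ≤ 1}
      < ENNReal.ofReal t * volume {x : Fin n → ℝ | eval x g ≤ 1}
        + ENNReal.ofReal (1 - t) * volume {x : Fin n → ℝ | eval x h ≤ 1} := by
  have hd : d ≠ 0 := by omega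
  rcases subsingleton_or_nontrivial (Fin n → ℝ) with hE | hE
  · refine absurd (MvPolynomial.funext fun x => ?_) hne
    rw [Subsingleton.elim x 0, hg.eval_zero hd, hh.eval_zero hd]
  set f := t • g + (1 - t) • h
  have hf : f.IsHomogeneous d := by
    simpa only [f, smul_eq_C_mul] using (hg.C_mul t).add (hh.C_mul (1 - t))
  have heval (x : Fin n → ℝ) : eval x f = t * eval x g + (1 - t) * eval x h := by
    simp [f, smul_eval]
  have hfv : volume {x | eval x f ≤ 1} ≠ ⊤ := by
    simp_rw [heval]
    exact ne_top_of_le_ne_top (measure_union_ne_top hgv hhv)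
      (measure_mono (setOf_convexComb_le_subset_union ht0.le ht1.le 1))
  have hlayer {q : MvPolynomial (Fin n) ℝ} (hq : q.IsHomogeneous d)
      (hqv : volume {x | eval x q ≤ 1} ≠ ⊤) :=
    hq.isPosHomogeneous_eval.lintegral_exp_neg_eq_gamma_mul volume
      (continuous_eval q).measurable hd hqv
  have key := lintegral_exp_neg_convexComb_lt (continuous_eval g).measurable
    (continuous_eval h).measurable (frequently_eval_ne volume hne)
    (by rw [hlayer hg hgv]; finiteness) (by rw [hlayer hh hhv]; finiteness) ht0 ht1
  simp_rw [← heval] at key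
  rw [hlayer hf hfv, hlayer hg hgv, hlayer hh hhv, mul_left_comm,
    mul_left_comm (ENNReal.ofReal (1 - t)), ← mul_add] at key
  exact (ENNReal.mul_lt_mul_iff_right
    (ENNReal.ofReal_pos.mpr (Real.Gamma_pos_of_pos (by positivity))).ne'
    ENNReal.ofReal_ne_top).mp key

theorem volume_sublevel_strictly_convex
    (n d : ℕ) (hd : Even d) (hd0 : 2 ≤ d)
    (g h : MvPolynomial (Fin n) ℝ)
    (hg : g.IsHomogeneous d) (hh : h.IsHomogeneous d)
    (hgv : volume {x : Fin n → ℝ | eval x g ≤ 1} ≠ ⊤)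
    (hhv : volume {x : Fin n → ℝ | eval x h ≤ 1} ≠ ⊤)
    (hne : g ≠ h) (t : ℝ) (ht0 : 0 < t) (ht1 : t < 1) :
    volume {x : Fin n → ℝ | eval x (t • g + (1 - t) • h) ≤ 1}
      < ENNReal.ofReal t * volume {x : Fin n → ℝ | eval x g ≤ 1}
        + ENNReal.ofReal (1 - t) * volume {x : Fin n → ℝ | eval x h ≤ 1} :=
  volume_sublevel_strictly_convex_general n d hd0 g h hg hh hgv hhv hne t ht0 ht1
end

section
/- Let g*(x) = (Σ_{i=1}^n x_i²)². Then, for G* = {x : g*(x) ≤ 1} = B₂ and ℓ = ‖g*‖₂² = n(n+2)/3 (weighted ℓ2-norm with multinomial weights), g* satisfies the fixed-point identity g*_α = ℓ · ((n+4)/n) · (∫_{G*} x^α dx) / vol(G*) for every multi-index α with |α| = 4. -/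
open MeasureTheory Set Pointwise

namespace QKKT
variable {n : ℕ}

def Ball (n : ℕ) : Set (Fin n → ℝ) := {x | ∑ i, x i ^ 2 ≤ 1}

lemma isClosed_ball : IsClosed (Ball n) :=
  isClosed_le (by continuity) continuous_const

lemma mball : MeasurableSet (Ball n) := isClosed_ball.measurableSet

lemma sq_le_one {x : Fin n → ℝ} (hx : x ∈ Ball n) (i : Fin n) : x i ^ 2 ≤ 1 :=
  le_trans (Finset.single_le_sum (f := fun i => x i ^ 2)
    (fun j _ => sq_nonneg _) (Finset.mem_univ i)) hx

lemma abs_le_one {x : Fin n → ℝ} (hx : x ∈ Ball n) (i : Fin n) : |x i| ≤ 1 :=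
  abs_le_one_iff_mul_self_le_one.2 (by nlinarith [sq_le_one hx i])

lemma ball_subset : Ball n ⊆ Set.pi Set.univ (fun _ : Fin n => Icc (-1:ℝ) 1) := by
  intro x hx i _
  exact abs_le.1 (abs_le_one hx i)

lemma volume_ball_lt_top : volume (Ball n) < ⊤ := by
  refine lt_of_le_of_lt (measure_mono ball_subset) ?_
  rw [volume_pi_pi]
  simp [Real.volume_Icc]

lemma volume_ball_pos (hn : 0 < n) : 0 < volume (Ball n) := by
  have hsub : Set.pi Set.univ (fun _ : Fin n => Icc (-(n:ℝ)⁻¹) (n:ℝ)⁻¹) ⊆ Ball n := by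
    intro x hx
    have : ∀ i, x i ^ 2 ≤ ((n:ℝ)⁻¹)^2 := by
      intro i
      have h := hx i (Set.mem_univ i)
      simp only [mem_Icc] at h
      nlinarith [h.1, h.2]
    calc ∑ i, x i ^ 2 ≤ ∑ _i : Fin n, ((n:ℝ)⁻¹)^2 := Finset.sum_le_sum (fun i _ => this i)
      _ = n * ((n:ℝ)⁻¹)^2 := by simp [mul_comm]
      _ ≤ 1 := by
          rw [sq]
          have hn' : (0:ℝ) < n := by exact_mod_cast hn
          rw [← mul_assoc, mul_inv_cancel₀ hn'.ne', one_mul]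
          exact inv_le_one_of_one_le₀ (by exact_mod_cast hn)
  refine lt_of_lt_of_le ?_ (measure_mono hsub)
  rw [volume_pi_pi]
  simp [Real.volume_Icc]
  positivity

lemma integral_comp_involution (L : (Fin n → ℝ) →ₗ[ℝ] (Fin n → ℝ))
    (hinv : Function.Involutive L) (hq : ∀ x, ∑ i, (L x) i ^ 2 = ∑ i, x i ^ 2)
    (f : (Fin n → ℝ) → ℝ) :
    ∫ x in Ball n, f (L x) = ∫ x in Ball n, f x := by
  have hdet : LinearMap.det L ≠ 0 := by
    intro h
    have h2 : LinearMap.det (L.comp L) = 1 := by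
      have : L.comp L = LinearMap.id := LinearMap.ext fun x => hinv x
      rw [this, LinearMap.det_id]
    rw [LinearMap.det_comp, h, mul_zero] at h2
    norm_num at h2
  have habs : |LinearMap.det L| = 1 := by
    have h2 : LinearMap.det (L.comp L) = 1 := by
      have : L.comp L = LinearMap.id := LinearMap.ext fun x => hinv x
      rw [this, LinearMap.det_id]
    rw [LinearMap.det_comp] at h2
    nlinarith [abs_nonneg (LinearMap.det L), sq_abs (LinearMap.det L), sq_nonneg (|LinearMap.det L| - 1)]
  have hmp : MeasurePreserving L volume volume := by
    constructor
    · exact L.continuous_of_finiteDimensional.measurable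
    · rw [Real.map_linearMap_volume_pi_eq_smul_volume_pi hdet]
      simp [abs_inv, habs]
  have hemb : MeasurableEmbedding L := by
    let e := LinearEquiv.ofInvolutive L hinv
    have : MeasurableEmbedding (e.toContinuousLinearEquiv.toHomeomorph) :=
      e.toContinuousLinearEquiv.toHomeomorph.measurableEmbedding
    exact this
  have hpre : L ⁻¹' (Ball n) = Ball n := by
    ext x
    simp only [Set.mem_preimage, Ball, Set.mem_setOf_eq, hq x]
  rw [← hmp.setIntegral_preimage_emb hemb f (Ball n), hpre]

lemma integrableOn_ball {f : (Fin n → ℝ) → ℝ} (hf : Continuous f)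
    (hb : ∀ x ∈ Ball n, |f x| ≤ 1) : IntegrableOn f (Ball n) := by
  refine Measure.integrableOn_of_bounded (M := 1) volume_ball_lt_top.ne hf.aestronglyMeasurable ?_
  rw [ae_restrict_iff' mball]
  exact Filter.Eventually.of_forall (fun x hx => hb x hx)

lemma integrableOn_mono (β : Fin n → ℕ) :
    IntegrableOn (fun x => ∏ k, x k ^ β k) (Ball n) := by
  refine integrableOn_ball (by continuity) (fun x hx => ?_)
  rw [Finset.abs_prod]
  refine Finset.prod_le_one (fun k _ => abs_nonneg _) (fun k _ => ?_)
  rw [abs_pow]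
  exact pow_le_one₀ (abs_nonneg _) (abs_le_one hx k)

/-- change of variables by a coordinate permutation -/
lemma integral_perm (σ : Equiv.Perm (Fin n)) (hσ : Function.Involutive σ)
    (f : (Fin n → ℝ) → ℝ) :
    ∫ x in Ball n, f (x ∘ σ) = ∫ x in Ball n, f x := by
  refine integral_comp_involution (LinearMap.funLeft ℝ ℝ σ) (fun x => ?_) (fun x => ?_) f
  · funext k; simp [LinearMap.funLeft, hσ k]
  · exact Equiv.sum_comp σ (fun k => x k ^ 2)

lemma Q_swap (i j : Fin n) :
    ∫ x in Ball n, x i ^ 4 = ∫ x in Ball n, x j ^ 4 := by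
  have := integral_perm (Equiv.swap i j) (fun m => Equiv.swap_apply_self i j m)
    (fun x => x j ^ 4)
  simpa using this

lemma R_transpose (a b i j : Fin n) :
    ∫ x in Ball n, x (Equiv.swap a b i) ^ 2 * x (Equiv.swap a b j) ^ 2
      = ∫ x in Ball n, x i ^ 2 * x j ^ 2 := by
  have := integral_perm (Equiv.swap a b) (fun m => Equiv.swap_apply_self a b m)
    (fun x => x i ^ 2 * x j ^ 2)
  simpa using this

lemma R_swap (i j k l : Fin n) (hij : i ≠ j) (hkl : k ≠ l) :
    ∫ x in Ball n, x i ^ 2 * x j ^ 2 = ∫ x in Ball n, x k ^ 2 * x l ^ 2 := by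
  have h1 := R_transpose i k i j
  rw [Equiv.swap_apply_left] at h1
  set j' := Equiv.swap i k j with hj'
  have hj'k : j' ≠ k := by
    intro h
    have h2 : Equiv.swap i k j = Equiv.swap i k i := by
      rw [Equiv.swap_apply_left]; exact hj'.symm.trans h
    exact hij ((Equiv.swap i k).injective h2).symm
  have h2 := R_transpose j' l k j'
  rw [Equiv.swap_apply_left, Equiv.swap_apply_of_ne_of_ne hj'k.symm hkl] at h2
  rw [← h1, ← h2]

/-- reflection in coordinate i kills odd monomials -/
lemma integral_odd_zero (i : Fin n) (β : Fin n → ℕ) (hodd : Odd (β i)) :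
    ∫ x in Ball n, ∏ k, x k ^ β k = 0 := by
  classical
  set L : (Fin n → ℝ) →ₗ[ℝ] (Fin n → ℝ) :=
    LinearMap.pi (fun j => if j = i then -LinearMap.proj i else LinearMap.proj j) with hL
  have happ : ∀ (x : Fin n → ℝ) (k : Fin n), L x k = if k = i then -x i else x k := by
    intro x k
    by_cases h : k = i <;> simp [hL, LinearMap.pi_apply, h]
  have key := integral_comp_involution L
      (fun x => by
        funext k
        by_cases h : k = i <;> simp [happ, h])
      (fun x => Finset.sum_congr rfl (fun k _ => by
        by_cases h : k = i <;> simp [happ, h]))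
      (fun x => ∏ k, x k ^ β k)
  have hcomp : ∀ x : Fin n → ℝ, (∏ k, L x k ^ β k) = -(∏ k, x k ^ β k) := by
    intro x
    rw [← Finset.mul_prod_erase Finset.univ _ (Finset.mem_univ i),
        ← Finset.mul_prod_erase Finset.univ (fun k => x k ^ β k) (Finset.mem_univ i)]
    rw [happ, if_pos rfl, hodd.neg_pow, neg_mul]
    congr 1
    congr 1
    refine Finset.prod_congr rfl (fun k hk => ?_)
    rw [happ, if_neg (Finset.mem_erase.1 hk).1]
  rw [show (fun x : Fin n → ℝ => ∏ k, (L x) k ^ β k) = fun x => -(∏ k, x k ^ β k) from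
    funext hcomp] at key
  rw [integral_neg] at key
  linarith

/-- 45 degree rotation in coordinates i j -/
lemma integral_rot (i j : Fin n) (hij : i ≠ j) :
    ∫ x in Ball n, ((x i ^ 2 - x j ^ 2) / 2) ^ 2 = ∫ x in Ball n, x i ^ 2 * x j ^ 2 := by
  classical
  set c : ℝ := (Real.sqrt 2)⁻¹ with hc
  have hcc : c * c = 1/2 := by
    rw [hc, ← mul_inv, Real.mul_self_sqrt (by norm_num)]
    norm_num
  set L : (Fin n → ℝ) →ₗ[ℝ] (Fin n → ℝ) :=
    LinearMap.pi (fun k => if k = i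
        then c • ((LinearMap.proj i : (Fin n → ℝ) →ₗ[ℝ] ℝ) + LinearMap.proj j)
      else if k = j then c • ((LinearMap.proj i : (Fin n → ℝ) →ₗ[ℝ] ℝ) - LinearMap.proj j)
      else LinearMap.proj k) with hL
  have happ : ∀ (x : Fin n → ℝ) (k : Fin n), L x k =
      if k = i then c * (x i + x j) else if k = j then c * (x i - x j) else x k := by
    intro x k
    by_cases h : k = i
    · simp [hL, LinearMap.pi_apply, h, smul_eq_mul, mul_add]
    · by_cases h' : k = j <;>
        simp [hL, LinearMap.pi_apply, h, h', Ne.symm hij, smul_eq_mul, mul_add, mul_sub]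
  have hLi : ∀ x : Fin n → ℝ, L x i = c * (x i + x j) := fun x => by rw [happ, if_pos rfl]
  have hLj : ∀ x : Fin n → ℝ, L x j = c * (x i - x j) := fun x => by
    rw [happ, if_neg hij.symm, if_pos rfl]
  have hLo : ∀ (x : Fin n → ℝ) (k : Fin n), k ≠ i → k ≠ j → L x k = x k := fun x k h h' => by
    rw [happ, if_neg h, if_neg h']
  have hsum : ∀ (y : Fin n → ℝ) (g : ℝ → ℝ), ∑ k, g (y k) =
      g (y i) + g (y j) + ∑ k ∈ (Finset.univ.erase i).erase j, g (y k) := by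
    intro y g
    rw [← Finset.add_sum_erase Finset.univ _ (Finset.mem_univ i),
        ← Finset.add_sum_erase (Finset.univ.erase i) _
          (Finset.mem_erase.2 ⟨hij.symm, Finset.mem_univ j⟩), add_assoc]
  have key := integral_comp_involution L
      (fun x => by
        funext k
        by_cases h : k = i
        · subst h
          rw [hLi, hLi, hLj]
          linear_combination (2 * x k) * hcc
        · by_cases h' : k = j
          · subst h'
            rw [hLj, hLi, hLj]
            linear_combination (2 * x k) * hcc
          · rw [hLo _ _ h h', hLo _ _ h h'])
      (fun x => by
        rw [hsum (L x) (fun t => t ^ 2), hsum x (fun t => t ^ 2), hLi, hLj]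
        have : ∑ k ∈ (Finset.univ.erase i).erase j, L x k ^ 2
            = ∑ k ∈ (Finset.univ.erase i).erase j, x k ^ 2 := by
          refine Finset.sum_congr rfl (fun k hk => ?_)
          rw [hLo _ _ (Finset.mem_erase.1 (Finset.mem_erase.1 hk).2).1 (Finset.mem_erase.1 hk).1]
        rw [this]
        linear_combination (2 * x i ^ 2 + 2 * x j ^ 2) * hcc)
      (fun x => x i ^ 2 * x j ^ 2)
  have hcomp : ∀ x : Fin n → ℝ, (L x i) ^ 2 * (L x j) ^ 2 = ((x i ^2 - x j ^2)/2)^2 := by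
    intro x
    rw [hLi, hLj]
    have : c * (x i + x j) * (c * (x i - x j)) = (x i ^2 - x j^2)/2 := by
      have : c * (x i + x j) * (c * (x i - x j)) = (c * c) * ((x i + x j) * (x i - x j)) := by ring
      rw [this, hcc]; ring
    calc (c * (x i + x j))^2 * (c * (x i - x j))^2
        = (c * (x i + x j) * (c * (x i - x j)))^2 := by ring
      _ = ((x i ^2 - x j^2)/2)^2 := by rw [this]
  rw [show (fun x : Fin n → ℝ => (L x) i ^ 2 * (L x) j ^ 2)
      = fun x => ((x i ^2 - x j ^2)/2)^2 from funext hcomp] at key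
  exact key

lemma volume_sublevel {s : ℝ} (hs : 0 < s) :
    volume {x : Fin n → ℝ | ∑ i, x i ^ 2 ≤ s}
      = ENNReal.ofReal (Real.sqrt s ^ n) * volume (Ball n) := by
  have hr : Real.sqrt s ≠ 0 := (Real.sqrt_pos.2 hs).ne'
  have hset : {x : Fin n → ℝ | ∑ i, x i ^ 2 ≤ s} = Real.sqrt s • Ball n := by
    ext x
    rw [Set.mem_smul_set_iff_inv_smul_mem₀ hr]
    simp only [Ball, Set.mem_setOf_eq, Pi.smul_apply, smul_eq_mul]
    have hexp : ∀ i : Fin n, ((Real.sqrt s)⁻¹ * x i) ^ 2 = s⁻¹ * x i ^ 2 := by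
      intro i
      rw [mul_pow, ← Real.sqrt_inv, Real.sq_sqrt (inv_nonneg.2 hs.le)]
    rw [Finset.sum_congr rfl (fun i _ => hexp i), ← Finset.mul_sum]
    rw [inv_mul_le_iff₀ hs, mul_one]
  rw [hset, Measure.addHaar_smul]
  congr 2
  · rw [Module.finrank_fintype_fun_eq_card, Fintype.card_fin, abs_of_nonneg
      (pow_nonneg (Real.sqrt_nonneg s) n)]

lemma sq_sum_le_one {x : Fin n → ℝ} (hx : x ∈ Ball n) : (∑ i, x i ^ 2) ^ 2 ≤ 1 := by
  have h0 : 0 ≤ ∑ i, x i ^ 2 := Finset.sum_nonneg (fun i _ => sq_nonneg _)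
  nlinarith [show ∑ i, x i ^ 2 ≤ 1 from hx, h0]

lemma integral_qsq (hn : 0 < n) :
    ∫ x in Ball n, (∑ i, x i ^ 2) ^ 2
      = (volume (Ball n)).toReal * n / (n + 4) := by
  classical
  set V := (volume (Ball n)).toReal with hV
  have hint : IntegrableOn (fun x : Fin n → ℝ => (∑ i, x i ^ 2) ^ 2) (Ball n) :=
    integrableOn_ball (by continuity)
      (fun x hx => by rw [abs_of_nonneg (sq_nonneg _)]; exact sq_sum_le_one hx)
  have hnn : 0 ≤ᵐ[volume.restrict (Ball n)] fun x : Fin n → ℝ => (∑ i, x i ^ 2) ^ 2 :=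
    Filter.Eventually.of_forall (fun x => sq_nonneg _)
  rw [Integrable.integral_eq_integral_meas_lt hint hnn]
  -- identify the measure of superlevel sets
  have hmeas : ∀ t ∈ Ioi (0:ℝ),
      ((volume.restrict (Ball n)) {x : Fin n → ℝ | t < (∑ i, x i ^ 2) ^ 2}).toReal
        = Set.indicator (Ioc (0:ℝ) 1) (fun t => V * (1 - t ^ ((n:ℝ)/4))) t := by
    intro t ht
    simp only [mem_Ioi] at ht
    rw [Measure.restrict_apply (measurableSet_lt measurable_const (by measurability))]
    by_cases h1 : t < 1
    · have hsub : {x : Fin n → ℝ | ∑ i, x i ^ 2 ≤ Real.sqrt t} ⊆ Ball n := by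
        intro x hx
        have hx' : ∑ i, x i ^ 2 ≤ Real.sqrt t := hx
        exact le_trans hx' (by
          rw [show (1:ℝ) = Real.sqrt 1 from (Real.sqrt_one).symm]
          exact Real.sqrt_le_sqrt h1.le)
      have hcompl : {x : Fin n → ℝ | t < (∑ i, x i ^ 2) ^ 2} ∩ Ball n
          = Ball n \ {x : Fin n → ℝ | ∑ i, x i ^ 2 ≤ Real.sqrt t} := by
        ext x
        simp only [Set.mem_inter_iff, Set.mem_setOf_eq, Set.mem_diff, not_le]
        constructor
        · rintro ⟨hlt, hB⟩
          refine ⟨hB, ?_⟩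
          by_contra hle
          push_neg at hle
          have h0 : 0 ≤ ∑ i, x i ^ 2 := Finset.sum_nonneg (fun i _ => sq_nonneg _)
          have := pow_le_pow_left₀ h0 hle 2
          rw [Real.sq_sqrt ht.le] at this
          linarith
        · rintro ⟨hB, hgt⟩
          refine ⟨?_, hB⟩
          have h0 : 0 ≤ Real.sqrt t := Real.sqrt_nonneg t
          have := pow_lt_pow_left₀ hgt h0 (by norm_num : (2:ℕ) ≠ 0)
          rwa [Real.sq_sqrt ht.le] at this
      rw [hcompl, measure_diff hsub (isClosed_le (by continuity) continuous_const).measurableSet.nullMeasurableSet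
        (lt_of_le_of_lt (measure_mono hsub) volume_ball_lt_top).ne,
        volume_sublevel (Real.sqrt_pos.2 ht)]
      rw [Set.indicator_of_mem (show t ∈ Ioc (0:ℝ) 1 from ⟨ht, h1.le⟩)]
      have hle : ENNReal.ofReal (Real.sqrt (Real.sqrt t) ^ n) * volume (Ball n)
          ≤ volume (Ball n) := by
        calc ENNReal.ofReal (Real.sqrt (Real.sqrt t) ^ n) * volume (Ball n)
            ≤ 1 * volume (Ball n) := by
              gcongr
              exact ENNReal.ofReal_le_one.2 (pow_le_one₀ (Real.sqrt_nonneg _)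
                (Real.sqrt_le_one.2 (Real.sqrt_le_one.2 h1.le)))
          _ = volume (Ball n) := one_mul _
      rw [ENNReal.toReal_sub_of_le hle volume_ball_lt_top.ne]
      rw [ENNReal.toReal_mul, ENNReal.toReal_ofReal (pow_nonneg (Real.sqrt_nonneg _) n)]
      have hpow : Real.sqrt (Real.sqrt t) ^ n = t ^ ((n:ℝ)/4) := by
        rw [Real.sqrt_eq_rpow, Real.sqrt_eq_rpow, ← Real.rpow_natCast _ n,
          ← Real.rpow_mul ht.le, ← Real.rpow_mul ht.le]
        congr 1
        ring
      rw [hpow]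
      ring
    · -- t ≥ 1 : empty
      push_neg at h1
      have hempty : {x : Fin n → ℝ | t < (∑ i, x i ^ 2) ^ 2} ∩ Ball n = ∅ := by
        ext x
        simp only [Set.mem_inter_iff, Set.mem_setOf_eq, Set.mem_empty_iff_false, iff_false]
        rintro ⟨hlt, hB⟩
        have := sq_sum_le_one hB
        linarith
      rw [hempty, measure_empty, ENNReal.toReal_zero]
      by_cases h2 : t ≤ 1
      · have : t = 1 := le_antisymm h2 h1
        subst this
        rw [Set.indicator_of_mem (mem_Ioc.2 ⟨ht, le_rfl⟩)]
        simp [Real.one_rpow]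
      · rw [Set.indicator_of_notMem (fun hmem => h2 (mem_Ioc.1 hmem).2)]
  rw [setIntegral_congr_fun measurableSet_Ioi (fun ⦃t⦄ ht => (measureReal_def _ _).trans (hmeas t ht)),
    setIntegral_indicator measurableSet_Ioc,
    Set.inter_eq_self_of_subset_right Ioc_subset_Ioi_self,
    ← intervalIntegral.integral_of_le zero_le_one]
  have hfun : (fun t : ℝ => V * (1 - t ^ ((n:ℝ)/4)))
      = fun t : ℝ => V - V * t ^ ((n:ℝ)/4) := by
    funext t; ring
  rw [hfun]
  have hp0 : (0:ℝ) ≤ (n:ℝ)/4 := by positivity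
  have hp : (-1 : ℝ) < (n:ℝ)/4 := by linarith
  have hintr : IntervalIntegrable (fun t : ℝ => V * t ^ ((n:ℝ)/4)) volume 0 1 :=
    (intervalIntegral.intervalIntegrable_rpow (by left; positivity) (μ := volume)).const_mul V
  rw [intervalIntegral.integral_sub intervalIntegrable_const hintr,
    intervalIntegral.integral_const, intervalIntegral.integral_const_mul,
    integral_rpow (Or.inl hp)]
  have h4 : (n:ℝ)/4 + 1 ≠ 0 := by positivity
  rw [Real.one_rpow, Real.zero_rpow h4]
  have hn4 : (n:ℝ) + 4 ≠ 0 := by positivity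
  field_simp
  ring

lemma E_int (i j : Fin n) : IntegrableOn (fun x : Fin n → ℝ => x i ^ 2 * x j ^ 2) (Ball n) := by
  refine integrableOn_ball (by continuity) (fun x hx => ?_)
  rw [abs_mul, abs_pow, abs_pow]
  exact mul_le_one₀ (pow_le_one₀ (abs_nonneg _) (abs_le_one hx i))
    (by positivity) (pow_le_one₀ (abs_nonneg _) (abs_le_one hx j))

lemma sum_decomp :
    ∫ x in Ball n, (∑ i, x i ^ 2) ^ 2
      = ∑ i, ∑ j, ∫ x in Ball n, x i ^ 2 * x j ^ 2 := by
  have h1 : (fun x : Fin n → ℝ => (∑ i, x i ^ 2) ^ 2)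
      = fun x => ∑ i, ∑ j, x i ^ 2 * x j ^ 2 := by
    funext x
    rw [sq, Finset.sum_mul_sum]
  rw [h1, integral_finset_sum _ (fun i _ => integrable_finset_sum _ (fun j _ => E_int i j))]
  exact Finset.sum_congr rfl (fun i _ => integral_finset_sum _ (fun j _ => E_int i j))

lemma Q_eq_3R (i j : Fin n) (hij : i ≠ j) :
    ∫ x in Ball n, x i ^ 2 * x i ^ 2 = 3 * ∫ x in Ball n, x i ^ 2 * x j ^ 2 := by
  have hrot := integral_rot i j hij
  have hexp : (fun x : Fin n → ℝ => ((x i ^ 2 - x j ^ 2) / 2) ^ 2)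
      = fun x => ((1/4) * (x i ^2 * x i ^2) + (1/4) * (x j ^2 * x j ^2))
          - (1/2) * (x i ^2 * x j ^2) := by
    funext x; ring
  rw [hexp] at hrot
  have hsub : ∫ x in Ball n, ((1/4) * (x i ^2 * x i ^2) + (1/4) * (x j ^2 * x j ^2)
        - (1/2) * (x i ^2 * x j ^2))
      = (∫ x in Ball n, ((1/4) * (x i ^2 * x i ^2) + (1/4) * (x j ^2 * x j ^2)))
        - ∫ x in Ball n, (1/2) * (x i ^2 * x j ^2) :=
    integral_sub (((E_int i i).const_mul _).add ((E_int j j).const_mul _))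
      ((E_int i j).const_mul _)
  have hadd : ∫ x in Ball n, ((1/4) * (x i ^2 * x i ^2) + (1/4) * (x j ^2 * x j ^2))
      = (∫ x in Ball n, (1/4) * (x i ^2 * x i ^2))
        + ∫ x in Ball n, (1/4) * (x j ^2 * x j ^2) :=
    integral_add ((E_int i i).const_mul _) ((E_int j j).const_mul _)
  rw [hsub, hadd, integral_const_mul, integral_const_mul, integral_const_mul] at hrot
  have hQ : ∫ x in Ball n, x j ^2 * x j ^2 = ∫ x in Ball n, x i ^2 * x i ^2 := by
    have h4 : ∀ k : Fin n, (fun x : Fin n → ℝ => x k ^2 * x k ^2) = fun x => x k ^ 4 := by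
      intro k; funext x; ring
    rw [h4, h4]
    exact Q_swap j i
  rw [hQ] at hrot
  linarith

lemma R_val {i j : Fin n} (hij : i ≠ j) :
    ∫ x in Ball n, x i ^ 2 * x j ^ 2
      = (volume (Ball n)).toReal / ((n + 2) * (n + 4)) := by
  classical
  have hn : 0 < n := Fin.pos i
  set V := (volume (Ball n)).toReal with hV
  set R := ∫ x in Ball n, x i ^ 2 * x j ^ 2 with hR
  have hQval : ∀ k : Fin n, ∫ x in Ball n, x k ^ 2 * x k ^ 2 = 3 * R := by
    intro k
    by_cases hk : k = i
    · subst hk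
      rw [Q_eq_3R k j hij]
    · rw [Q_eq_3R k i hk, R_swap k i i j hk hij]
  have hRval : ∀ k l : Fin n, k ≠ l → ∫ x in Ball n, x k ^ 2 * x l ^ 2 = R := by
    intro k l hkl
    rw [R_swap k l i j hkl hij]
  have hsum : ∑ k, ∑ l, ∫ x in Ball n, x k ^ 2 * x l ^ 2 = n * ((n + 2) * R) := by
    have hinner : ∀ k : Fin n, ∑ l, ∫ x in Ball n, x k ^ 2 * x l ^ 2 = (n + 2) * R := by
      intro k
      rw [← Finset.add_sum_erase Finset.univ _ (Finset.mem_univ k), hQval k]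
      have : ∑ l ∈ Finset.univ.erase k, ∫ x in Ball n, x k ^ 2 * x l ^ 2
          = ∑ l ∈ Finset.univ.erase k, R :=
        Finset.sum_congr rfl (fun l hl => hRval k l (Ne.symm (Finset.mem_erase.1 hl).1))
      rw [this, Finset.sum_const, Finset.card_erase_of_mem (Finset.mem_univ k),
        Finset.card_univ, Fintype.card_fin, nsmul_eq_mul]
      have hcast : ((n - 1 : ℕ) : ℝ) = (n : ℝ) - 1 := by
        rw [Nat.cast_sub hn]
        norm_num
      rw [hcast]
      ring
    rw [Finset.sum_congr rfl (fun k _ => hinner k), Finset.sum_const, Finset.card_univ,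
      Fintype.card_fin, nsmul_eq_mul]
  have hS := integral_qsq hn
  rw [sum_decomp] at hS
  rw [hsum] at hS
  have hn' : (0:ℝ) < n := by exact_mod_cast hn
  have h2 : (0:ℝ) < (n:ℝ) + 2 := by linarith
  have h4 : (0:ℝ) < (n:ℝ) + 4 := by linarith
  rw [hR]
  field_simp at hS ⊢
  nlinarith [hS]

lemma Q_val (i : Fin n) :
    ∫ x in Ball n, x i ^ 2 * x i ^ 2
      = 3 * (volume (Ball n)).toReal / ((n + 2) * (n + 4)) := by
  classical
  have hn : 0 < n := Fin.pos i
  by_cases h2 : 1 < n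
  · obtain ⟨j, hj⟩ := Fintype.exists_ne_of_one_lt_card (by simpa using h2) i
    rw [Q_eq_3R i j (Ne.symm hj), R_val (Ne.symm hj)]
    ring
  · -- n = 1
    have hn1 : n = 1 := by omega
    subst hn1
    have hS := integral_qsq hn
    rw [sum_decomp] at hS
    have : ∑ k : Fin 1, ∑ l : Fin 1, ∫ x in Ball 1, x k ^ 2 * x l ^ 2
        = ∫ x in Ball 1, x i ^ 2 * x i ^ 2 := by
      rw [show i = (0 : Fin 1) from Subsingleton.elim i 0]
      simp
    rw [this] at hS
    rw [hS]
    push_cast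
    ring

open MvPolynomial in
lemma coeff_sq (α : Fin n →₀ ℕ) :
    coeff α ((∑ i : Fin n, (X i : MvPolynomial (Fin n) ℝ) ^ 2) ^ 2)
      = ∑ i : Fin n, ∑ j : Fin n,
          (if Finsupp.single i 2 + Finsupp.single j 2 = α then (1:ℝ) else 0) := by
  rw [sq, Finset.sum_mul_sum]
  rw [MvPolynomial.coeff_sum]
  refine Finset.sum_congr rfl (fun i _ => ?_)
  rw [MvPolynomial.coeff_sum]
  refine Finset.sum_congr rfl (fun j _ => ?_)
  rw [X_pow_eq_monomial, X_pow_eq_monomial, monomial_mul, one_mul, coeff_monomial]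

lemma pair_even {i j : Fin n} {α : Fin n →₀ ℕ}
    (h : Finsupp.single i 2 + Finsupp.single j 2 = α) (k : Fin n) : Even (α k) := by
  rw [← h, Finsupp.add_apply, Finsupp.single_apply, Finsupp.single_apply]
  rcases eq_or_ne i k with h1 | h1 <;> rcases eq_or_ne j k with h2 | h2 <;>
    simp [h1, h2] <;> decide

lemma pair_apply (i j k : Fin n) :
    (Finsupp.single i 2 + Finsupp.single j 2 : Fin n →₀ ℕ) k
      = (if i = k then 2 else 0) + (if j = k then 2 else 0) := by
  rw [Finsupp.add_apply, Finsupp.single_apply, Finsupp.single_apply]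

lemma pair_eq_single_iff {i j k : Fin n} :
    Finsupp.single i 2 + Finsupp.single j 2 = Finsupp.single k 4 ↔ i = k ∧ j = k := by
  constructor
  · intro h
    have hi := (pair_apply i j i).symm.trans (DFunLike.congr_fun h i)
    have hj := (pair_apply i j j).symm.trans (DFunLike.congr_fun h j)
    rw [Finsupp.single_apply] at hi hj
    rw [if_pos rfl] at hi
    rw [if_pos (rfl : j = j)] at hj
    constructor
    · by_contra hik
      rw [if_neg (fun hh : k = i => hik hh.symm)] at hi
      split_ifs at hi <;> omega
    · by_contra hjk
      rw [if_neg (fun hh : k = j => hjk hh.symm)] at hj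
      split_ifs at hj <;> omega
  · rintro ⟨rfl, rfl⟩
    rw [← Finsupp.single_add]

lemma pair_eq_pair_iff {i j k l : Fin n} (hij : i ≠ j) :
    Finsupp.single k 2 + Finsupp.single l 2 = Finsupp.single i 2 + Finsupp.single j 2
      ↔ (k = i ∧ l = j) ∨ (k = j ∧ l = i) := by
  constructor
  · intro h
    have hvk := (pair_apply k l k).symm.trans ((DFunLike.congr_fun h k).trans (pair_apply i j k))
    have hvl := (pair_apply k l l).symm.trans ((DFunLike.congr_fun h l).trans (pair_apply i j l))
    rw [if_pos rfl] at hvk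
    rw [if_pos (rfl : l = l)] at hvl
    have hkl : k ≠ l := by
      rintro rfl
      rw [if_pos rfl] at hvk
      split_ifs at hvk with h1 h2 h2
      · exact hij (h1.trans h2.symm)
      all_goals omega
    rw [if_neg (fun hh : l = k => hkl hh.symm)] at hvk
    rw [if_neg hkl] at hvl
    have hk : k = i ∨ k = j := by
      by_contra hc
      push_neg at hc
      rw [if_neg (fun hh : i = k => hc.1 hh.symm), if_neg (fun hh : j = k => hc.2 hh.symm)] at hvk
      omega
    have hl : l = i ∨ l = j := by
      by_contra hc
      push_neg at hc
      rw [if_neg (fun hh : i = l => hc.1 hh.symm), if_neg (fun hh : j = l => hc.2 hh.symm)] at hvl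
      omega
    rcases hk with rfl | rfl
    · left
      refine ⟨rfl, ?_⟩
      rcases hl with rfl | rfl
      · exact absurd rfl hkl
      · rfl
    · right
      refine ⟨rfl, ?_⟩
      rcases hl with rfl | rfl
      · rfl
      · exact absurd rfl hkl
  · rintro (⟨rfl, rfl⟩ | ⟨rfl, rfl⟩)
    · rfl
    · rw [add_comm]

lemma classify (α : Fin n →₀ ℕ) (hα : ∑ i, α i = 4) (heven : ∀ i, Even (α i)) :
    (∃ i, α = Finsupp.single i 4)
      ∨ ∃ i j, i ≠ j ∧ α = Finsupp.single i 2 + Finsupp.single j 2 := by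
  classical
  have hex : ∃ i, α i ≠ 0 := by
    by_contra hc
    push_neg at hc
    rw [Finset.sum_congr rfl (fun i _ => hc i)] at hα
    simp at hα
  obtain ⟨i, hi⟩ := hex
  have hle : α i ≤ 4 := hα ▸ Finset.single_le_sum (f := fun k => α k)
    (fun k _ => Nat.zero_le _) (Finset.mem_univ i)
  have hsplit : α i + ∑ k ∈ Finset.univ.erase i, α k = 4 := by
    rw [Finset.add_sum_erase Finset.univ _ (Finset.mem_univ i), hα]
  have hcases : α i = 2 ∨ α i = 4 := by
    rcases heven i with ⟨m, hm⟩
    omega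
  rcases hcases with h2 | h4
  · -- α i = 2, find second index
    have hrest : ∑ k ∈ Finset.univ.erase i, α k = 2 := by omega
    have hex2 : ∃ j ∈ Finset.univ.erase i, α j ≠ 0 := by
      by_contra hc
      push_neg at hc
      rw [Finset.sum_congr rfl hc] at hrest
      simp at hrest
    obtain ⟨j, hjmem, hj⟩ := hex2
    have hji : j ≠ i := (Finset.mem_erase.1 hjmem).1
    have hlej : α j ≤ 2 := hrest ▸ Finset.single_le_sum (f := fun k => α k)
      (fun k _ => Nat.zero_le _) hjmem
    have hj2 : α j = 2 := by
      rcases heven j with ⟨m, hm⟩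
      omega
    have hrest2 : ∑ k ∈ (Finset.univ.erase i).erase j, α k = 0 := by
      rw [← Finset.add_sum_erase _ (fun k => α k) hjmem] at hrest
      omega
    have hzero : ∀ k, k ≠ i → k ≠ j → α k = 0 := by
      intro k hki hkj
      have hkmem : k ∈ (Finset.univ.erase i).erase j :=
        Finset.mem_erase.2 ⟨hkj, Finset.mem_erase.2 ⟨hki, Finset.mem_univ k⟩⟩
      exact Nat.eq_zero_of_le_zero (hrest2 ▸ Finset.single_le_sum (f := fun k => α k)
        (fun k _ => Nat.zero_le _) hkmem)
    right
    refine ⟨i, j, hji.symm, ?_⟩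
    ext k
    rw [pair_apply]
    by_cases h1 : i = k
    · subst h1
      rw [if_pos rfl, if_neg (fun hh : j = i => hji hh), h2]
    · by_cases hh2 : j = k
      · subst hh2
        rw [if_neg h1, if_pos rfl, hj2]
      · rw [if_neg h1, if_neg hh2, hzero k (fun hh => h1 hh.symm) (fun hh => hh2 hh.symm)]
  · -- α i = 4
    left
    refine ⟨i, ?_⟩
    have hrest : ∑ k ∈ Finset.univ.erase i, α k = 0 := by omega
    have hzero : ∀ k, k ≠ i → α k = 0 := by
      intro k hki
      exact Nat.eq_zero_of_le_zero (hrest ▸ Finset.single_le_sum (f := fun k => α k)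
        (fun k _ => Nat.zero_le _) (Finset.mem_erase.2 ⟨hki, Finset.mem_univ k⟩))
    ext k
    rw [Finsupp.single_apply]
    by_cases h1 : i = k
    · subst h1
      rw [if_pos rfl, h4]
    · rw [if_neg h1, hzero k (fun hh => h1 hh.symm)]

lemma prod_one_off {M : Type*} [CommMonoid M] (i : Fin n) (g : Fin n → M)
    (hg : ∀ k, k ≠ i → g k = 1) : ∏ k, g k = g i := by
  rw [← Finset.mul_prod_erase Finset.univ g (Finset.mem_univ i)]
  rw [Finset.prod_eq_one (fun k hk => hg k (Finset.mem_erase.1 hk).1), mul_one]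

lemma prod_two_off {M : Type*} [CommMonoid M] (i j : Fin n) (hij : i ≠ j) (g : Fin n → M)
    (hg : ∀ k, k ≠ i → k ≠ j → g k = 1) : ∏ k, g k = g i * g j := by
  rw [← Finset.mul_prod_erase Finset.univ g (Finset.mem_univ i),
    ← Finset.mul_prod_erase _ g (Finset.mem_erase.2 ⟨hij.symm, Finset.mem_univ j⟩)]
  rw [Finset.prod_eq_one (fun k hk => hg k (Finset.mem_erase.1 (Finset.mem_erase.1 hk).2).1
    (Finset.mem_erase.1 hk).1), mul_one]

lemma prod_pow_single (x : Fin n → ℝ) (i : Fin n) :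
    ∏ k, x k ^ (Finsupp.single i 4 : Fin n →₀ ℕ) k = x i ^ 2 * x i ^ 2 := by
  rw [prod_one_off i _ (fun k hk => by
    rw [Finsupp.single_apply, if_neg (fun hh : i = k => hk hh.symm), pow_zero])]
  rw [Finsupp.single_apply, if_pos rfl]
  ring

lemma prod_pow_pair (x : Fin n → ℝ) (i j : Fin n) (hij : i ≠ j) :
    ∏ k, x k ^ ((Finsupp.single i 2 + Finsupp.single j 2 : Fin n →₀ ℕ)) k
      = x i ^ 2 * x j ^ 2 := by
  rw [prod_two_off i j hij _ (fun k hki hkj => by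
    rw [pair_apply, if_neg (fun hh : i = k => hki hh.symm),
      if_neg (fun hh : j = k => hkj hh.symm), pow_zero])]
  rw [pair_apply, if_pos rfl, if_neg (Ne.symm hij), pair_apply, if_pos rfl,
    if_neg hij]

lemma fact_single (i : Fin n) :
    ∏ k, (Nat.factorial ((Finsupp.single i 4 : Fin n →₀ ℕ) k) : ℝ) = 24 := by
  rw [prod_one_off i _ (fun k hk => by
    rw [Finsupp.single_apply, if_neg (fun hh : i = k => hk hh.symm)]
    norm_num)]
  rw [Finsupp.single_apply, if_pos rfl]
  norm_num [Nat.factorial]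

lemma fact_pair (i j : Fin n) (hij : i ≠ j) :
    ∏ k, (Nat.factorial (((Finsupp.single i 2 + Finsupp.single j 2 : Fin n →₀ ℕ)) k) : ℝ)
      = 4 := by
  rw [prod_two_off i j hij _ (fun k hki hkj => by
    rw [pair_apply, if_neg (fun hh : i = k => hki hh.symm),
      if_neg (fun hh : j = k => hkj hh.symm)]
    norm_num)]
  rw [pair_apply, if_pos rfl, if_neg (Ne.symm hij), pair_apply, if_pos rfl, if_neg hij]
  norm_num [Nat.factorial]

lemma count_single (i : Fin n) :
    ∑ k : Fin n, ∑ l : Fin n,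
        (if Finsupp.single k 2 + Finsupp.single l 2 = Finsupp.single i 4 then (1:ℝ) else 0)
      = 1 := by
  have h : ∀ k l : Fin n,
      (if Finsupp.single k 2 + Finsupp.single l 2 = Finsupp.single i 4 then (1:ℝ) else 0)
        = if k = i ∧ l = i then (1:ℝ) else 0 := fun k l =>
    if_congr pair_eq_single_iff rfl rfl
  rw [Finset.sum_congr rfl (fun k _ => Finset.sum_congr rfl (fun l _ => h k l))]
  simp [Finset.sum_ite_eq', ite_and]

lemma count_pair (i j : Fin n) (hij : i ≠ j) :
    ∑ k : Fin n, ∑ l : Fin n,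
        (if Finsupp.single k 2 + Finsupp.single l 2
            = Finsupp.single i 2 + Finsupp.single j 2 then (1:ℝ) else 0)
      = 2 := by
  have h : ∀ k l : Fin n,
      (if Finsupp.single k 2 + Finsupp.single l 2
          = Finsupp.single i 2 + Finsupp.single j 2 then (1:ℝ) else 0)
        = (if k = i ∧ l = j then (1:ℝ) else 0) + (if k = j ∧ l = i then (1:ℝ) else 0) := by
    intro k l
    rw [if_congr (pair_eq_pair_iff hij) rfl rfl]
    by_cases h1 : k = i ∧ l = j
    · have h2 : ¬(k = j ∧ l = i) := fun h2 => hij (h1.1.symm.trans h2.1)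
      rw [if_pos (Or.inl h1), if_pos h1, if_neg h2, add_zero]
    · by_cases h2 : k = j ∧ l = i
      · rw [if_pos (Or.inr h2), if_neg h1, if_pos h2, zero_add]
      · rw [if_neg (fun hh => hh.elim h1 h2), if_neg h1, if_neg h2, add_zero]
  rw [Finset.sum_congr rfl (fun k _ => Finset.sum_congr rfl (fun l _ => h k l))]
  rw [Finset.sum_congr rfl (fun k (_ : k ∈ Finset.univ) => Finset.sum_add_distrib)]
  rw [Finset.sum_add_distrib]
  simp [Finset.sum_ite_eq', ite_and]
  norm_num

end QKKT

open MeasureTheory MvPolynomial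

theorem quartic_kkt_fixed_point
    (n : ℕ) (hn : 0 < n) (α : Fin n →₀ ℕ) (hα : ∑ i, α i = 4) :
    coeff α ((∑ i : Fin n, (X i : MvPolynomial (Fin n) ℝ) ^ 2) ^ 2)
        / ((24 : ℝ) / ∏ i, (Nat.factorial (α i) : ℝ))
      = (n * (n + 2) / 3 : ℝ) * ((n + 4) / n) *
          (∫ x in {x : Fin n → ℝ | ∑ i, x i ^ 2 ≤ 1}, ∏ i, x i ^ α i) /
          (volume {x : Fin n → ℝ | ∑ i, x i ^ 2 ≤ 1}).toReal := by
  classical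
  rw [show {x : Fin n → ℝ | ∑ i, x i ^ 2 ≤ 1} = QKKT.Ball n from rfl]
  rw [QKKT.coeff_sq α]
  set V := (volume (QKKT.Ball n)).toReal with hVdef
  have hV : 0 < V :=
    ENNReal.toReal_pos (QKKT.volume_ball_pos hn).ne' QKKT.volume_ball_lt_top.ne
  have hn' : (0:ℝ) < n := by exact_mod_cast hn
  have h2 : (0:ℝ) < (n:ℝ) + 2 := by linarith
  have h4 : (0:ℝ) < (n:ℝ) + 4 := by linarith
  by_cases heven : ∀ i, Even (α i)
  · rcases QKKT.classify α hα heven with ⟨i, rfl⟩ | ⟨i, j, hij, rfl⟩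
    · rw [QKKT.count_single i, QKKT.fact_single i]
      have hfun : (fun x : Fin n → ℝ => ∏ k, x k ^ (Finsupp.single i 4 : Fin n →₀ ℕ) k)
          = fun x => x i ^ 2 * x i ^ 2 := funext fun x => QKKT.prod_pow_single x i
      rw [hfun, QKKT.Q_val i, ← hVdef]
      field_simp
    · rw [QKKT.count_pair i j hij, QKKT.fact_pair i j hij]
      have hfun : (fun x : Fin n → ℝ =>
            ∏ k, x k ^ ((Finsupp.single i 2 + Finsupp.single j 2 : Fin n →₀ ℕ)) k)
          = fun x => x i ^ 2 * x j ^ 2 := funext fun x => QKKT.prod_pow_pair x i j hij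
      rw [hfun, QKKT.R_val hij, ← hVdef]
      field_simp
      ring
  · push_neg at heven
    obtain ⟨i, hi⟩ := heven
    have hcount : ∑ k : Fin n, ∑ l : Fin n,
        (if Finsupp.single k 2 + Finsupp.single l 2 = α then (1:ℝ) else 0) = 0 := by
      refine Finset.sum_eq_zero (fun k _ => Finset.sum_eq_zero (fun l _ => ?_))
      exact if_neg (fun h => hi (QKKT.pair_even h i))
    have hint : ∫ x in QKKT.Ball n, ∏ k, x k ^ α k = 0 :=
      QKKT.integral_odd_zero i (fun k => α k) (Nat.not_even_iff_odd.1 hi)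
    rw [hcount, hint]
    simp
end

section
/- For even d ≥ 4 and n ≥ 2, the matrix I − (n+d) · M / vol(B_d) is not positive semidefinite, where M is the moment matrix with entries M(α,β) = ∫_{B_d} x^{α+β} dx indexed by multi-indices α, β of degree d/2 and B_d = {x : Σ_i x_i^d ≤ 1}. -/
/-!
Write `B = {x | ∑ xᵢ ^ d ≤ 1}`. Since `f = ∑ xᵢ ^ d` is `d`-homogeneous, `{f ≤ t} = t ^ (1/d) • B`
has volume `t ^ (n/d) vol B`, and the layer-cake formula gives `∫_B f = n/(n+d) · vol B`. By
symmetry of `B` under permuting coordinates, every pure moment is `∫_B xᵢ ^ d = vol B/(n+d)`, so the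
diagonal entry of `1 - (n+d)/vol B • M` at the pure power `a = (d/2) eᵢ` vanishes. A positive
semidefinite matrix with a zero diagonal entry has a zero row (its 2 × 2 principal minors are
nonnegative), but for `b = (d/2 - 2) eᵢ + 2 eⱼ` the entry at `(a, b)` is
`-(n+d)/vol B · ∫_B xᵢ ^ (d-2) xⱼ ^ 2 < 0`.
-/

open MeasureTheory Set Module Pointwise ComplexOrder

section Homogeneous

variable {E : Type*} {f : E → ℝ} {p : ℝ}

lemma setOf_le_eq_rpow_smul [AddCommGroup E] [Module ℝ E] (hp : p ≠ 0)
    (hf : ∀ r : ℝ, 0 < r → ∀ x, f (r • x) = r ^ p * f x) {t : ℝ} (ht : 0 < t) :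
    {x | f x ≤ t} = t ^ p⁻¹ • {x | f x ≤ 1} := by
  ext x
  have hr : 0 < t ^ p⁻¹ := Real.rpow_pos_of_pos ht _
  rw [mem_smul_set_iff_inv_smul_mem₀ hr.ne', mem_ofPred_eq, mem_ofPred_eq, hf _ (inv_pos.2 hr),
    Real.inv_rpow hr.le, Real.rpow_inv_rpow ht.le hp, inv_mul_le_iff₀ ht, mul_one]

variable [NormedAddCommGroup E] [NormedSpace ℝ E] [FiniteDimensional ℝ E]
  [MeasurableSpace E] [BorelSpace E] {μ : Measure E} [μ.IsAddHaarMeasure]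

lemma measureReal_setOf_le (hp : p ≠ 0) (hf : ∀ r : ℝ, 0 < r → ∀ x, f (r • x) = r ^ p * f x)
    {t : ℝ} (ht : 0 < t) :
    μ.real {x | f x ≤ t} = t ^ (finrank ℝ E / p) * μ.real {x | f x ≤ 1} := by
  rw [setOf_le_eq_rpow_smul hp hf ht, measureReal_def, Measure.addHaar_smul_of_nonneg μ
    (Real.rpow_nonneg ht.le _), ENNReal.toReal_mul, ENNReal.toReal_ofReal (by positivity),
    ← Real.rpow_natCast, ← Real.rpow_mul ht.le, inv_mul_eq_div, measureReal_def]

lemma measureReal_setOf_lt_inter_setOf_le_one (hp : 0 < p)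
    (hf : ∀ r : ℝ, 0 < r → ∀ x, f (r • x) = r ^ p * f x) (hf_meas : Measurable f)
    (hfin : μ {x | f x ≤ 1} ≠ ⊤) {t : ℝ} (ht : 0 < t) :
    μ.real ({x | t < f x} ∩ {x | f x ≤ 1})
      = (Ioc 0 1).indicator (fun t => μ.real {x | f x ≤ 1} * (1 - t ^ (finrank ℝ E / p))) t := by
  by_cases ht1 : t ≤ 1
  · have hsub : {x | f x ≤ t} ⊆ {x | f x ≤ 1} := fun x hx => le_trans hx ht1
    have hdiff : {x | t < f x} ∩ {x | f x ≤ 1} = {x | f x ≤ 1} \ {x | f x ≤ t} := by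
      ext; simp [and_comm]
    rw [hdiff, measureReal_sdiff hsub (measurableSet_le hf_meas measurable_const) hfin,
      indicator_of_mem (show t ∈ Ioc 0 1 from ⟨ht, ht1⟩), measureReal_setOf_le hp.ne' hf ht]
    ring
  · have hempty : {x | t < f x} ∩ {x | f x ≤ 1} = ∅ :=
      eq_empty_of_forall_notMem fun x hx => ht1 (hx.1.le.trans hx.2)
    rw [indicator_of_notMem (fun h => ht1 h.2), hempty, measureReal_empty]

lemma setIntegral_setOf_le_one_self (hp : 0 < p)
    (hf : ∀ r : ℝ, 0 < r → ∀ x, f (r • x) = r ^ p * f x) (hf_meas : Measurable f)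
    (hf_nonneg : ∀ x, 0 ≤ f x) (hfin : μ {x | f x ≤ 1} ≠ ⊤) :
    ∫ x in {x | f x ≤ 1}, f x ∂μ = finrank ℝ E / (finrank ℝ E + p) * μ.real {x | f x ≤ 1} := by
  have hS : MeasurableSet {x | f x ≤ 1} := measurableSet_le hf_meas measurable_const
  have hint : IntegrableOn f {x | f x ≤ 1} μ :=
    Measure.integrableOn_of_bounded (M := 1) hfin hf_meas.aestronglyMeasurable
      ((ae_restrict_iff' hS).2 (.of_forall fun x hx => by rwa [Real.norm_of_nonneg (hf_nonneg x)]))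
  have hq : -1 < (finrank ℝ E / p : ℝ) := by
    linarith [show 0 ≤ (finrank ℝ E / p : ℝ) by positivity]
  rw [hint.integral_eq_integral_meas_lt (.of_forall hf_nonneg), setIntegral_congr_fun
      measurableSet_Ioi fun t (ht : 0 < t) => by
        rw [measureReal_restrict_apply' hS,
          measureReal_setOf_lt_inter_setOf_le_one hp hf hf_meas hfin ht],
    setIntegral_indicator measurableSet_Ioc, inter_eq_right.2 Ioc_subset_Ioi_self,
    ← intervalIntegral.integral_of_le zero_le_one, intervalIntegral.integral_const_mul,
    intervalIntegral.integral_sub intervalIntegrable_const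
      (intervalIntegral.intervalIntegrable_rpow' hq), integral_rpow (.inl hq),
    intervalIntegral.integral_const, Real.one_rpow, Real.zero_rpow (by linarith)]
  field_simp
  ring

end Homogeneous

section SumPowBall

variable {ι : Type*} [Fintype ι]

lemma setIntegral_comp_perm (σ : Equiv.Perm ι) {S : Set (ι → ℝ)} (hS : ∀ x, x ∘ σ ∈ S ↔ x ∈ S)
    (g : (ι → ℝ) → ℝ) : ∫ x in S, g (x ∘ σ) = ∫ x in S, g x := by
  let e : (ι → ℝ) ≃ᵐ (ι → ℝ) := MeasurableEquiv.arrowCongr' σ.symm (MeasurableEquiv.refl ℝ)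
  have he : ⇑e = fun x => x ∘ σ := rfl
  have := (volume_preserving_arrowCongr' σ.symm (MeasurableEquiv.refl ℝ)
    (.id _)).setIntegral_preimage_emb e.measurableEmbedding g S
  rwa [he, show (fun x : ι → ℝ => x ∘ σ) ⁻¹' S = S from Set.ext hS] at this

lemma setIntegral_prod_pow_pos {S : Set (ι → ℝ)} (hS : 0 < volume S) {γ : ι → ℕ}
    (hγ : ∀ i, Even (γ i)) (hint : IntegrableOn (fun x : ι → ℝ => ∏ i, x i ^ γ i) S) :
    0 < ∫ x in S, ∏ i, x i ^ γ i := by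
  have hnonneg : ∀ x : ι → ℝ, 0 ≤ ∏ i, x i ^ γ i := fun x =>
    Finset.prod_nonneg fun i _ => (hγ i).pow_nonneg _
  rw [setIntegral_pos_iff_support_of_nonneg_ae (.of_forall hnonneg) hint]
  have hnull : volume (⋃ i, {x : ι → ℝ | x i = 0}) = 0 :=
    measure_iUnion_null fun i => Measure.pi_hyperplane _ i 0
  refine hS.trans_le ((measure_sdiff_null hnull).symm.le.trans (measure_mono ?_))
  rintro x ⟨hxS, hx⟩
  simp only [mem_iUnion, mem_ofPred_eq, not_exists] at hx
  exact ⟨Finset.prod_ne_zero_iff.2 fun i _ => pow_ne_zero _ (hx i), hxS⟩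

variable {d : ℕ}

variable (ι d) in
def sumPowBall : Set (ι → ℝ) := {x | ∑ i, x i ^ d ≤ 1}

lemma isCompact_sumPowBall (hd : Even d) (hd0 : d ≠ 0) : IsCompact (sumPowBall ι d) := by
  refine (isCompact_univ_pi fun _ => isCompact_Icc (a := (-1 : ℝ)) (b := 1)).of_isClosed_subset
    (isClosed_le (by fun_prop) continuous_const) fun x hx i _ => ?_
  have hxi : x i ^ d ≤ 1 :=
    (Finset.single_le_sum (fun j _ => hd.pow_nonneg (x j)) (Finset.mem_univ i)).trans hx
  rw [← hd.pow_abs, pow_le_one_iff_of_nonneg (abs_nonneg _) hd0] at hxi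
  exact abs_le.1 hxi

lemma Continuous.integrableOn_sumPowBall (hd : Even d) (hd0 : d ≠ 0) {g : (ι → ℝ) → ℝ}
    (hg : Continuous g) : IntegrableOn g (sumPowBall ι d) :=
  hg.continuousOn.integrableOn_compact (isCompact_sumPowBall hd hd0)

lemma volume_sumPowBall_pos (hd0 : d ≠ 0) : 0 < volume (sumPowBall ι d) := by
  have hopen : IsOpen {x : ι → ℝ | ∑ i, x i ^ d < 1} := isOpen_lt (by fun_prop) continuous_const
  exact (hopen.measure_pos volume ⟨0, by simp [zero_pow hd0]⟩).trans_le
    (measure_mono fun _ hx => le_of_lt (α := ℝ) hx)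

lemma setIntegral_sumPowBall_sum_pow (hd : Even d) (hd0 : d ≠ 0) :
    ∫ x in sumPowBall ι d, ∑ i, x i ^ d
      = Fintype.card ι / (Fintype.card ι + d) * volume.real (sumPowBall ι d) := by
  rw [sumPowBall, setIntegral_setOf_le_one_self (Nat.cast_pos.2 (Nat.pos_of_ne_zero hd0))
    (fun r _ x => ?_) (by fun_prop) (fun x => Finset.sum_nonneg fun i _ => hd.pow_nonneg _)
    (isCompact_sumPowBall hd hd0).measure_lt_top.ne, Module.finrank_fintype_fun_eq_card]
  simp [mul_pow, Finset.mul_sum, Real.rpow_natCast]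

lemma setIntegral_sumPowBall_pow (hd : Even d) (hd0 : d ≠ 0) [DecidableEq ι] (i : ι) :
    ∫ x in sumPowBall ι d, x i ^ d = volume.real (sumPowBall ι d) / (Fintype.card ι + d) := by
  have hsymm (j : ι) : ∫ x in sumPowBall ι d, x j ^ d = ∫ x in sumPowBall ι d, x i ^ d := by
    refine (setIntegral_comp_perm (Equiv.swap i j) (fun x => ?_) (· j ^ d)).symm.trans ?_
    · simp only [sumPowBall, mem_ofPred_eq, Function.comp_apply,
        Equiv.sum_comp (Equiv.swap i j) (x · ^ d)]
    · simp
  have hcard : (Fintype.card ι : ℝ) ≠ 0 := Nat.cast_ne_zero.2 (Fintype.card_pos_iff.2 ⟨i⟩).ne'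
  have hsum := setIntegral_sumPowBall_sum_pow (ι := ι) hd hd0
  rw [integral_finsetSum _ fun j _ =>
      Continuous.integrableOn_sumPowBall (g := (· j ^ d)) hd hd0 (by fun_prop),
    Finset.sum_congr rfl fun j _ => hsymm j, Finset.sum_const, Finset.card_univ,
    nsmul_eq_mul] at hsum
  field_simp at hsum ⊢
  exact hsum

end SumPowBall

lemma prod_pow_piSingle_add_piSingle {ι M : Type*} [Fintype ι] [DecidableEq ι] [CommMonoid M]
    (x : ι → M) (i : ι) (m m' : ℕ) :
    ∏ l, x l ^ (Pi.single (M := fun _ => ℕ) i m l + Pi.single (M := fun _ => ℕ) i m' l)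
      = x i ^ (m + m') := by
  rw [Fintype.prod_eq_single i fun l hl => by simp [hl]]
  simp

lemma Matrix.PosSemidef.apply_eq_zero_of_apply_self_eq_zero {ι 𝕜 : Type*} [Fintype ι]
    [DecidableEq ι] [RCLike 𝕜] {A : Matrix ι ι 𝕜} (hA : A.PosSemidef) {i : ι} (hi : A i i = 0)
    (j : ι) : A i j = 0 := by
  have hdet := (hA.submatrix ![i, j]).det_nonneg
  simp only [Matrix.det_fin_two, Matrix.submatrix_apply, Matrix.cons_val_zero,
    Matrix.cons_val_one, hi, zero_mul, zero_sub, ← hA.isHermitian.apply j i, RCLike.star_def,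
    RCLike.mul_conj, neg_nonneg] at hdet
  have hnorm : ‖A i j‖ ^ 2 ≤ 0 := by exact_mod_cast hdet
  exact norm_eq_zero.1 (pow_eq_zero_iff two_ne_zero |>.1 (hnorm.antisymm (by positivity)))

section MomentMatrix

open Finset.Nat

variable {n k d : ℕ}

variable (n k d) in
noncomputable def momentMatrix : Matrix (antidiagonalTuple n k) (antidiagonalTuple n k) ℝ :=
  Matrix.of fun α β =>
    ∫ x in sumPowBall (Fin n) d, ∏ i, x i ^ ((α : Fin n → ℕ) i + (β : Fin n → ℕ) i)

lemma momentMatrix_apply_self_of_eq_piSingle (hkd : k + k = d) (hd0 : d ≠ 0)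
    {α : antidiagonalTuple n k} {i : Fin n} (hα : (α : Fin n → ℕ) = Pi.single i k) :
    momentMatrix n k d α α = volume.real (sumPowBall (Fin n) d) / (n + d) := by
  rw [momentMatrix, Matrix.of_apply, hα]
  simp only [prod_pow_piSingle_add_piSingle, hkd]
  rw [setIntegral_sumPowBall_pow ⟨k, hkd.symm⟩ hd0, Fintype.card_fin]

lemma momentMatrix_pos (hd : Even d) (hd0 : d ≠ 0) {α β : antidiagonalTuple n k}
    (hαβ : ∀ i, Even ((α : Fin n → ℕ) i + (β : Fin n → ℕ) i)) : 0 < momentMatrix n k d α β :=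
  setIntegral_prod_pow_pos (volume_sumPowBall_pos hd0) hαβ
    (Continuous.integrableOn_sumPowBall hd hd0 (by fun_prop))

end MomentMatrix

theorem identity_sub_moment_matrix_not_psd
    (n d : ℕ) (hd : Even d) (hd4 : 4 ≤ d) (hn : 2 ≤ n) :
    ¬ Matrix.PosSemidef
        ((1 : Matrix (Finset.Nat.antidiagonalTuple n (d / 2))
            (Finset.Nat.antidiagonalTuple n (d / 2)) ℝ)
          - ((n + d : ℝ) / (volume {x : Fin n → ℝ | ∑ i, x i ^ d ≤ 1}).toReal) •
            Matrix.of (fun α β :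
                Finset.Nat.antidiagonalTuple n (d / 2) =>
              ∫ x in {x : Fin n → ℝ | ∑ i, x i ^ d ≤ 1},
                ∏ i, x i ^ ((α : Fin n → ℕ) i + (β : Fin n → ℕ) i))) := by
  intro h
  change (1 - ((n + d : ℝ) / volume.real (sumPowBall (Fin n) d)) •
    momentMatrix n (d / 2) d).PosSemidef at h
  have hd0 : d ≠ 0 := by omega
  have hV : 0 < volume.real (sumPowBall (Fin n) d) := ENNReal.toReal_pos
    (volume_sumPowBall_pos hd0).ne' (isCompact_sumPowBall hd hd0).measure_lt_top.ne
  let i : Fin n := ⟨0, by omega⟩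
  let j : Fin n := ⟨1, by omega⟩
  let a : Finset.Nat.antidiagonalTuple n (d / 2) :=
    ⟨Pi.single i (d / 2), by simp [Finset.Nat.mem_antidiagonalTuple]⟩
  -- `a + b` has even coordinates, so the moment at `(a, b)` has a nonnegative integrand.
  let b : Finset.Nat.antidiagonalTuple n (d / 2) :=
    ⟨Pi.single i (d / 2 - 2) + Pi.single j 2, by
      simp [Finset.Nat.mem_antidiagonalTuple, Finset.sum_add_distrib]; omega⟩
  have hab : a ≠ b := fun hab => by
    simpa [a, b, i, j] using congr_fun (congr_arg Subtype.val hab) j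
  refine absurd (h.apply_eq_zero_of_apply_self_eq_zero (i := a) ?_ b) ?_
  · rw [Matrix.sub_apply, Matrix.one_apply_eq, Matrix.smul_apply, smul_eq_mul,
      momentMatrix_apply_self_of_eq_piSingle (by rcases hd with ⟨k, rfl⟩; omega) hd0 rfl,
      div_mul_div_cancel₀ hV.ne', div_self (by positivity), sub_self]
  · rw [Matrix.sub_apply, Matrix.one_apply_ne hab, Matrix.smul_apply, smul_eq_mul, zero_sub,
      neg_eq_zero]
    refine (mul_pos (by positivity) (momentMatrix_pos hd hd0 fun l => ?_)).ne'
    simp only [a, b, Pi.add_apply, Pi.single_apply, Nat.even_iff]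
    have := Nat.even_iff.1 hd
    split_ifs <;> omega
end
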